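/- arXiv:2311.01733 — 9 statements merged into one kernel-verified Lean document; each statement's English description precedes it below -/
import Mathlib

section
/- For the complete bipartite graph K_{m,n} with m ≥ n ≥ 2, the independent domination stability equals 1. -/
open SimpleGraph

/-- `S` is an independent dominating set of `G`. -/
def SimpleGraph.IsIndepDomSet {V : Type*} (G : SimpleGraph V) (S : Set V) : Prop :=
  (S.Pairwise fun u v => ¬ G.Adj u v) ∧ ∀ v ∉ S, ∃ u ∈ S, G.Adj v u

/-- The independent domination number `γᵢ(G)`. -/
noncomputable def indepDomNum (V : Type*) [Fintype V] (G : SimpleGraph V) : ℕ :=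
  sInf {n | ∃ S : Finset V, G.IsIndepDomSet ↑S ∧ S.card = n}

/-- The independent domination stability `st_id(G)`: the minimum number of
vertices whose removal changes the independent domination number. -/
noncomputable def idStability (V : Type*) [Fintype V] [DecidableEq V]
    (G : SimpleGraph V) : ℕ :=
  sInf {k | ∃ A : Finset V, A.card = k ∧ A.Nonempty ∧
    indepDomNum _ (G.induce (↑(Aᶜ) : Set V)) ≠ indepDomNum V G}

/-!
Since `K_{m,n}` is complete bipartite, an independent set lies inside one side, and it dominates
only if it is that whole side; so the independent dominating sets are exactly the two sides and
`γᵢ(K_{m,n}) = min m n = n`. Deleting one vertex of the smaller side leaves `K_{m,n-1}`, whose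
`γᵢ` is `n - 1`, so a single vertex already changes `γᵢ`.
-/

open Finset

namespace Finset

theorem card_filter_coe_sort {X : Type*} (T : Finset X) (p : X → Prop) [DecidablePred p] :
    #{v : (T : Set X) | p v} = #{x ∈ T | p x} := by
  rw [← card_map (Function.Embedding.subtype _)]
  congr 1
  ext x
  simp [and_comm]

section Sum

variable {V W : Type*} [Fintype V] [Fintype W]

theorem card_filter_isLeft_eq_true : #{v : V ⊕ W | v.isLeft = true} = Fintype.card V := by
  rw [← card_univ, ← card_map (Function.Embedding.inl : V ↪ V ⊕ W)]
  congr 1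
  ext (x | x) <;> simp

theorem card_filter_isLeft_eq_false : #{v : V ⊕ W | v.isLeft = false} = Fintype.card W := by
  rw [← card_univ, ← card_map (Function.Embedding.inr : W ↪ V ⊕ W)]
  congr 1
  ext (x | x) <;> simp

end Sum

end Finset

namespace SimpleGraph

section CompleteMultipartite

variable {V α : Type*} {G : SimpleGraph V} {f : V → α}

theorem IsIndepDomSet.nonempty [Nonempty V] {S : Set V} (hS : G.IsIndepDomSet S) :
    S.Nonempty := by
  by_contra hempty
  obtain ⟨v⟩ := ‹Nonempty V›
  obtain ⟨u, hu, -⟩ := hS.2 v fun hv => hempty ⟨v, hv⟩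
  exact hempty ⟨u, hu⟩

variable [Fintype V] [DecidableEq α]

theorem isIndepDomSet_fiber (hG : ∀ u v, G.Adj u v ↔ f u ≠ f v) {a : α} (ha : ∃ v, f v = a) :
    G.IsIndepDomSet ↑({v | f v = a} : Finset V) := by
  obtain ⟨w, rfl⟩ := ha
  refine ⟨fun u hu v hv _ huv => ?_, fun v hv => ⟨w, by simp, (hG v w).2 (by simpa using hv)⟩⟩
  simp only [coe_filter, mem_univ, true_and, Set.mem_ofPred_eq] at hu hv
  exact (hG u v).1 huv (hu.trans hv.symm)

theorem IsIndepDomSet.eq_fiber (hG : ∀ u v, G.Adj u v ↔ f u ≠ f v) {S : Finset V}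
    (hS : G.IsIndepDomSet ↑S) {s : V} (hs : s ∈ S) : S = ({v | f v = f s} : Finset V) := by
  have hfiber : ∀ v ∈ S, f v = f s := fun v hv => by
    by_contra hne
    exact hS.1 hv hs (fun h => hne (h ▸ rfl)) ((hG v s).2 hne)
  ext v
  refine ⟨fun hv => by simpa using hfiber v hv, fun hv => ?_⟩
  by_contra hvS
  obtain ⟨u, hu, hvu⟩ := hS.2 v hvS
  exact (hG v u).1 hvu (((mem_filter_univ _).1 hv).trans (hfiber u hu).symm)

theorem indepDomNum_eq_min {f : V → Bool} (hG : ∀ u v, G.Adj u v ↔ f u ≠ f v)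
    (htrue : ∃ v, f v = true) (hfalse : ∃ v, f v = false) :
    indepDomNum V G = min #{v | f v = true} #{v | f v = false} := by
  have : Nonempty V := htrue.nonempty
  suffices {k | ∃ S : Finset V, G.IsIndepDomSet ↑S ∧ #S = k} =
      {#{v | f v = true}, #{v | f v = false}} by
    rw [indepDomNum, this, csInf_pair]
  ext k
  constructor
  · rintro ⟨S, hS, rfl⟩
    obtain ⟨s, hs⟩ := hS.nonempty
    rw [hS.eq_fiber hG (mem_coe.1 hs)]
    cases f s <;> simp
  · rintro (rfl | rfl)
    exacts [⟨_, isIndepDomSet_fiber hG htrue, rfl⟩, ⟨_, isIndepDomSet_fiber hG hfalse, rfl⟩]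

end CompleteMultipartite

theorem idStability_eq_one_of_ne {V : Type*} [Fintype V] [DecidableEq V] {G : SimpleGraph V}
    (v : V) (hv : indepDomNum _ (G.induce ↑({v}ᶜ : Finset V)) ≠ indepDomNum V G) :
    idStability V G = 1 := by
  have hmem : 1 ∈ {k | ∃ A : Finset V, #A = k ∧ A.Nonempty ∧
      indepDomNum _ (G.induce ↑(Aᶜ)) ≠ indepDomNum V G} :=
    ⟨{v}, card_singleton v, singleton_nonempty v, hv⟩
  exact le_antisymm (Nat.sInf_le hmem) (le_csInf ⟨1, hmem⟩ fun _ ⟨_, hA, hne, _⟩ => hA ▸ hne.card_pos)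

section CompleteBipartite

variable {V W : Type*}

theorem completeBipartiteGraph_adj_iff_isLeft_ne {u v : V ⊕ W} :
    (completeBipartiteGraph V W).Adj u v ↔ u.isLeft ≠ v.isLeft := by
  cases u <;> cases v <;> simp

variable [Fintype V] [Fintype W]

theorem indepDomNum_completeBipartiteGraph [Nonempty V] [Nonempty W] :
    indepDomNum _ (completeBipartiteGraph V W) = min (Fintype.card V) (Fintype.card W) := by
  obtain ⟨v⟩ := ‹Nonempty V›
  obtain ⟨w⟩ := ‹Nonempty W›
  rw [indepDomNum_eq_min (fun _ _ => completeBipartiteGraph_adj_iff_isLeft_ne)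
    ⟨.inl v, rfl⟩ ⟨.inr w, rfl⟩, card_filter_isLeft_eq_true, card_filter_isLeft_eq_false]

theorem indepDomNum_completeBipartiteGraph_induce_compl_inr [DecidableEq V] [DecidableEq W]
    [Nonempty V] {w : W} (hW : 2 ≤ Fintype.card W) :
    indepDomNum _ ((completeBipartiteGraph V W).induce ↑({Sum.inr w}ᶜ : Finset (V ⊕ W))) =
      min (Fintype.card V) (Fintype.card W - 1) := by
  obtain ⟨v⟩ := ‹Nonempty V›
  obtain ⟨w', hw'⟩ := Fintype.exists_ne_of_one_lt_card hW w
  set T : Finset (V ⊕ W) := {Sum.inr w}ᶜ with hT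
  rw [indepDomNum_eq_min (f := fun x : (T : Set (V ⊕ W)) => (x : V ⊕ W).isLeft)
    (fun _ _ => completeBipartiteGraph_adj_iff_isLeft_ne)
    ⟨⟨.inl v, by simp [T]⟩, rfl⟩ ⟨⟨.inr w', by simpa [T] using hw'⟩, rfl⟩,
    card_filter_coe_sort T (fun x => x.isLeft = true),
    card_filter_coe_sort T (fun x => x.isLeft = false), hT, compl_singleton,
    filter_erase, filter_erase, erase_eq_of_notMem (by simp), card_filter_isLeft_eq_true,
    card_erase_of_mem (by simp), card_filter_isLeft_eq_false]

end CompleteBipartite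

end SimpleGraph

/-- For the complete bipartite graph `K_{m,n}` with `m ≥ n ≥ 2`,
the independent domination stability equals 1. -/
theorem stmt1 (m n : ℕ) (hn : 2 ≤ n) (hmn : n ≤ m) :
    idStability _ (completeBipartiteGraph (Fin m) (Fin n)) = 1 := by
  have : Nonempty (Fin m) := ⟨⟨0, by omega⟩⟩
  have : Nonempty (Fin n) := ⟨⟨0, by omega⟩⟩
  refine SimpleGraph.idStability_eq_one_of_ne (.inr ⟨0, by omega⟩) ?_
  rw [SimpleGraph.indepDomNum_completeBipartiteGraph,
    SimpleGraph.indepDomNum_completeBipartiteGraph_induce_compl_inr (by simpa using hn)]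
  simp only [Fintype.card_fin]
  omega
end

section
/- The independent domination stability of a graph G of order n equals n if and only if G is the complete graph K_n. -/
open SimpleGraph

section aux
variable {V : Type*} [Fintype V] (G : SimpleGraph V)

/-- Every finite graph has an independent dominating set (a maximum independent set works). -/
lemma exists_IDS : ∃ S : Finset V, G.IsIndepDomSet ↑S := by
  classical
  set T : Set ℕ := {n | ∃ S : Finset V, (↑S : Set V).Pairwise (fun u v => ¬ G.Adj u v) ∧ S.card = n} with hT
  have hTne : T.Nonempty := ⟨0, ∅, by simp⟩
  have hbdd : BddAbove T := ⟨Fintype.card V, by rintro n ⟨S, -, rfl⟩; simpa using S.card_le_univ⟩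
  obtain ⟨S, hSind, hScard⟩ := Nat.sSup_mem hTne hbdd
  refine ⟨S, hSind, fun v hv => ?_⟩
  by_contra h
  push_neg at h
  have hvS : v ∉ S := by simpa using hv
  have hmem : S.card + 1 ∈ T := by
    refine ⟨insert v S, ?_, by rw [Finset.card_insert_of_notMem hvS]⟩
    rw [Finset.coe_insert]
    exact hSind.insert fun u hu _ =>
      ⟨fun hadj => h u hu hadj, fun hadj => h u hu hadj.symm⟩
  have h2 := le_csSup hbdd hmem
  rw [← hScard] at h2
  omega

variable {G}

lemma idn_le {S : Finset V} (h : G.IsIndepDomSet ↑S) : indepDomNum V G ≤ S.card :=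
  Nat.sInf_le ⟨S, h, rfl⟩

lemma idn_spec : ∃ S : Finset V, G.IsIndepDomSet ↑S ∧ S.card = indepDomNum V G := by
  obtain ⟨S, hS⟩ := exists_IDS G
  exact Nat.sInf_mem (s := {n | ∃ S : Finset V, G.IsIndepDomSet ↑S ∧ S.card = n}) ⟨S.card, S, hS, rfl⟩

lemma idn_le_card : indepDomNum V G ≤ Fintype.card V := by
  obtain ⟨S, -, hc⟩ := idn_spec (G := G)
  rw [← hc]
  simpa using S.card_le_univ

lemma idn_pos [Nonempty V] : 1 ≤ indepDomNum V G := by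
  obtain ⟨S, hS, hc⟩ := idn_spec (G := G)
  rcases S.eq_empty_or_nonempty with rfl | hne
  · obtain ⟨u, hu, -⟩ := hS.2 (Classical.arbitrary V) (by simp)
    simp at hu
  · rw [← hc]; exact hne.card_pos

lemma idn_empty [IsEmpty V] : indepDomNum V G = 0 := by
  have h : G.IsIndepDomSet ↑(∅ : Finset V) := ⟨by simp, fun v => isEmptyElim v⟩
  simpa using Nat.le_zero.mp (by simpa using idn_le h)

lemma idn_edgeless (h : ∀ x y, ¬ G.Adj x y) : indepDomNum V G = Fintype.card V := by
  classical
  apply le_antisymm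
  · have hu : G.IsIndepDomSet ↑(Finset.univ : Finset V) :=
      ⟨fun x _ y _ _ => h x y, fun v hv => absurd (by simp) hv⟩
    simpa using idn_le hu
  · obtain ⟨S, hS, hc⟩ := idn_spec (G := G)
    have hSu : S = Finset.univ := by
      rw [Finset.eq_univ_iff_forall]
      intro v; by_contra hv
      obtain ⟨u, -, hadj⟩ := hS.2 v (by simpa using hv)
      exact h v u hadj
    rw [← hc, hSu, Finset.card_univ]

lemma idn_top [Nonempty V] : indepDomNum V (⊤ : SimpleGraph V) = 1 := by
  refine le_antisymm ?_ idn_pos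
  have v := Classical.arbitrary V
  have h : (⊤ : SimpleGraph V).IsIndepDomSet ↑({v} : Finset V) := by
    constructor
    · simp
    · intro x hx
      refine ⟨v, by simp, ?_⟩
      simp only [Finset.coe_singleton, Set.mem_singleton_iff] at hx
      simpa using hx
  simpa using idn_le h

end aux

/-- `st_id(G) = |V(G)|` if and only if `G` is the complete graph. -/
theorem stmt2 {V : Type*} [Fintype V] [DecidableEq V] (G : SimpleGraph V) :
    idStability V G = Fintype.card V ↔ G = ⊤ := by
  classical
  rcases isEmpty_or_nonempty V with hV | hV
  · constructor
    · intro _; ext u v; exact isEmptyElim u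
    · intro _
      have hset : {k | ∃ A : Finset V, A.card = k ∧ A.Nonempty ∧
          indepDomNum _ (G.induce (↑(Aᶜ) : Set V)) ≠ indepDomNum V G} = ∅ := by
        ext k
        simp only [Set.mem_setOf_eq, Set.mem_empty_iff_false, iff_false, not_exists]
        rintro A ⟨-, ⟨a, -⟩, -⟩
        exact isEmptyElim a
      rw [idStability, hset, Nat.sInf_empty]
      simp
  · constructor
    · intro hst
      by_contra hne
      have hex : ∃ u v, u ≠ v ∧ ¬ G.Adj u v := by
        by_contra hc
        push_neg at hc
        apply hne
        ext u v
        simp only [top_adj]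
        exact ⟨G.ne_of_adj, fun h => hc u v h⟩
      obtain ⟨u, v, huv, hnadj⟩ := hex
      rcases eq_or_ne (indepDomNum V G) 1 with h1 | h1
      · -- γᵢ(G) = 1 : use A = {u,v}ᶜ
        set A : Finset V := ({u, v} : Finset V)ᶜ with hA
        rcases A.eq_empty_or_nonempty with hAe | hAne
        · -- then univ = {u,v}, contradict γᵢ = 1
          have huniv : ({u, v} : Finset V) = Finset.univ := by
            rw [← Finset.compl_eq_empty_iff]; exact hAe
          obtain ⟨S, hS, hc⟩ := idn_spec (G := G)
          rw [h1] at hc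
          obtain ⟨w, rfl⟩ := Finset.card_eq_one.mp hc
          have hw : w ∈ ({u, v} : Finset V) := huniv ▸ Finset.mem_univ w
          simp only [Finset.mem_insert, Finset.mem_singleton] at hw
          rcases hw with rfl | rfl
          · obtain ⟨x, hx, hadj⟩ := hS.2 v (by simpa using huv.symm)
            simp only [Finset.coe_singleton, Set.mem_singleton_iff] at hx
            subst hx
            exact hnadj hadj.symm
          · obtain ⟨x, hx, hadj⟩ := hS.2 u (by simpa using huv)
            simp only [Finset.coe_singleton, Set.mem_singleton_iff] at hx
            subst hx
            exact hnadj hadj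
        · -- A nonempty : induced graph on {u,v} is edgeless with 2 vertices
          have hedge : ∀ x y, ¬ (G.induce (↑(Aᶜ) : Set V)).Adj x y := by
            rintro ⟨x, hx⟩ ⟨y, hy⟩ hadj
            rw [hA, compl_compl] at hx hy
            simp only [Finset.coe_insert, Finset.coe_singleton, Set.mem_insert_iff,
              Set.mem_singleton_iff] at hx hy
            have hadj' : G.Adj x y := hadj
            rcases hx with rfl | rfl <;> rcases hy with rfl | rfl
            · exact G.irrefl hadj'
            · exact hnadj hadj'
            · exact hnadj hadj'.symm
            · exact G.irrefl hadj'
          have hcard2 : Fintype.card ↥(↑(Aᶜ) : Set V) = 2 := by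
            rw [hA, compl_compl]
            simp [Finset.card_pair huv]
          have hval : indepDomNum _ (G.induce (↑(Aᶜ) : Set V)) = 2 := by
            rw [idn_edgeless hedge, hcard2]
          have hmem : A.card ∈ {k | ∃ A : Finset V, A.card = k ∧ A.Nonempty ∧
              indepDomNum _ (G.induce (↑(Aᶜ) : Set V)) ≠ indepDomNum V G} :=
            ⟨A, rfl, hAne, by rw [hval, h1]; omega⟩
          have hlt : A.card < Fintype.card V := by
            refine (Finset.card_lt_iff_ne_univ A).mpr fun hEq => ?_
            have : u ∈ A := hEq ▸ Finset.mem_univ u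
            rw [hA, Finset.mem_compl] at this
            exact this (by simp)
          have := Nat.sInf_le hmem
          rw [idStability] at hst
          omega
      · -- γᵢ(G) ≠ 1 : use A = {u}ᶜ
        set A : Finset V := ({u} : Finset V)ᶜ with hA
        have hAne : A.Nonempty := ⟨v, by simp [hA, huv.symm]⟩
        have hedge : ∀ x y, ¬ (G.induce (↑(Aᶜ) : Set V)).Adj x y := by
          rintro ⟨x, hx⟩ ⟨y, hy⟩ hadj
          rw [hA, compl_compl] at hx hy
          simp only [Finset.coe_singleton, Set.mem_singleton_iff] at hx hy
          subst hx; subst hy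
          exact G.irrefl hadj
        have hcard1 : Fintype.card ↥(↑(Aᶜ) : Set V) = 1 := by
          rw [hA, compl_compl]; simp
        have hval : indepDomNum _ (G.induce (↑(Aᶜ) : Set V)) = 1 := by
          rw [idn_edgeless hedge, hcard1]
        have hmem : A.card ∈ {k | ∃ A : Finset V, A.card = k ∧ A.Nonempty ∧
            indepDomNum _ (G.induce (↑(Aᶜ) : Set V)) ≠ indepDomNum V G} :=
          ⟨A, rfl, hAne, by rw [hval]; exact fun h => h1 h.symm⟩
        have hlt : A.card < Fintype.card V := by
          refine (Finset.card_lt_iff_ne_univ A).mpr fun hEq => ?_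
          have : u ∈ A := hEq ▸ Finset.mem_univ u
          rw [hA, Finset.mem_compl] at this
          exact this (by simp)
        have := Nat.sInf_le hmem
        rw [idStability] at hst
        omega
    · rintro rfl
      have hmem : Fintype.card V ∈ {k | ∃ A : Finset V, A.card = k ∧ A.Nonempty ∧
          indepDomNum _ ((⊤ : SimpleGraph V).induce (↑(Aᶜ) : Set V)) ≠ indepDomNum V ⊤} := by
        refine ⟨Finset.univ, Finset.card_univ, Finset.univ_nonempty, ?_⟩
        haveI : IsEmpty ↥(↑((Finset.univ : Finset V)ᶜ) : Set V) :=
          ⟨fun x => by simpa using x.2⟩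
        rw [idn_empty, idn_top]
        omega
      have hge : ∀ k ∈ {k | ∃ A : Finset V, A.card = k ∧ A.Nonempty ∧
          indepDomNum _ ((⊤ : SimpleGraph V).induce (↑(Aᶜ) : Set V)) ≠ indepDomNum V ⊤},
          Fintype.card V ≤ k := by
        rintro k ⟨A, rfl, hAne, hdiff⟩
        rcases eq_or_ne A Finset.univ with rfl | hAu
        · simp
        · exfalso
          obtain ⟨w, hw⟩ := Finset.nonempty_iff_ne_empty.mpr
            (fun he => hAu (by rwa [← Finset.compl_eq_empty_iff]))
          haveI : Nonempty ↥(↑(Aᶜ) : Set V) := ⟨⟨w, by simpa using hw⟩⟩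
          have htop : (⊤ : SimpleGraph V).induce (↑(Aᶜ) : Set V) = ⊤ := by
            ext a b
            simp only [comap_adj, Function.Embedding.coe_subtype, top_adj]
            exact Subtype.coe_ne_coe
          rw [htop, idn_top, idn_top] at hdiff
          exact hdiff rfl
      rw [idStability]
      exact le_antisymm (Nat.sInf_le hmem) (le_csInf ⟨_, hmem⟩ hge)
end

section
/- For the generalized friendship graph F_{q,n} with q ∈ {4,5,6}, the independent domination number is n+1. -/
open SimpleGraph

/-- The generalized friendship graph `F_{q,n}`: `n` cycles of length `q`
sharing the common vertex `none`; the `i`-th cycle is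
`none, (i,0), (i,1), …, (i,q-2), none`. -/
def genFriendshipGraph (q n : ℕ) : SimpleGraph (Option (Fin n × Fin (q - 1))) :=
  SimpleGraph.fromRel fun u v =>
    match u, v with
    | none, some (_, j) => j.val = 0 ∨ j.val = q - 2
    | some (i, j), some (i', j') => i = i' ∧ j'.val = j.val + 1
    | _, _ => False

lemma gfg_adj_none_some {q n : ℕ} (i : Fin n) (j : Fin (q-1)) :
    (genFriendshipGraph q n).Adj none (some (i, j)) ↔ (j.val = 0 ∨ j.val = q - 2) := by
  simp [genFriendshipGraph, SimpleGraph.fromRel_adj]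

lemma gfg_adj_some_some {q n : ℕ} (i i' : Fin n) (j j' : Fin (q-1)) :
    (genFriendshipGraph q n).Adj (some (i, j)) (some (i', j')) ↔
      (i, j) ≠ (i', j') ∧ ((i = i' ∧ j'.val = j.val + 1) ∨ (i' = i ∧ j.val = j'.val + 1)) := by
  simp [genFriendshipGraph, SimpleGraph.fromRel_adj]

lemma gfg_upper {q n : ℕ} (hq4 : 4 ≤ q) (hq6 : q ≤ 6) :
    ∃ S : Finset (Option (Fin n × Fin (q-1))),
      (genFriendshipGraph q n).IsIndepDomSet ↑S ∧ S.card = n + 1 := by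
  have hc : (q-2)/2 < q - 1 := by omega
  set c : Fin (q-1) := ⟨(q-2)/2, hc⟩ with hcdef
  have hc0 : c.val ≠ 0 := by simp [hcdef]; omega
  have hcq : c.val ≠ q - 2 := by simp [hcdef]; omega
  refine ⟨insert none ((Finset.univ : Finset (Fin n)).image fun i => some (i, c)), ⟨?_, ?_⟩, ?_⟩
  · -- independence
    intro u hu v hv huv
    simp only [Finset.coe_insert, Set.mem_insert_iff, Finset.coe_image, Set.mem_image,
      Finset.mem_coe, Finset.mem_univ, true_and, Finset.coe_univ, Set.image_univ,
      Set.mem_range] at hu hv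
    rcases hu with rfl | ⟨i, rfl⟩ <;> rcases hv with rfl | ⟨i', rfl⟩
    · exact absurd rfl huv
    · rw [gfg_adj_none_some]; omega
    · intro h
      rw [(genFriendshipGraph q n).adj_comm, gfg_adj_none_some] at h; omega
    · rw [gfg_adj_some_some]
      rintro ⟨-, ⟨-, h⟩ | ⟨-, h⟩⟩ <;> omega
  · -- domination
    intro v hv
    simp only [Finset.coe_insert, Set.mem_insert_iff, Finset.coe_image, Finset.coe_univ,
      Set.image_univ, Set.mem_range] at hv
    push_neg at hv
    obtain ⟨hvn, hvi⟩ := hv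
    match v with
    | none => exact absurd rfl hvn
    | some (i, j) =>
      have hjc : j ≠ c := fun h => hvi i (by rw [h])
      have hjc' : j.val ≠ c.val := fun h => hjc (Fin.ext h)
      have hlt := j.isLt
      have hcv : c.val = (q-2)/2 := rfl
      have key : j.val = 0 ∨ j.val = q - 2 ∨ j.val = c.val + 1 ∨ c.val = j.val + 1 := by omega
      rcases key with h | h | h | h
      · refine ⟨none, by simp, ?_⟩
        rw [(genFriendshipGraph q n).adj_comm, gfg_adj_none_some]; omega
      · refine ⟨none, by simp, ?_⟩
        rw [(genFriendshipGraph q n).adj_comm, gfg_adj_none_some]; omega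
      · refine ⟨some (i, c), by simp, ?_⟩
        rw [gfg_adj_some_some]
        exact ⟨by simp [Prod.ext_iff]; intro h'; omega, Or.inr ⟨rfl, h⟩⟩
      · refine ⟨some (i, c), by simp, ?_⟩
        rw [gfg_adj_some_some]
        exact ⟨by simp [Prod.ext_iff]; intro h'; omega, Or.inl ⟨rfl, h⟩⟩
  · -- cardinality
    rw [Finset.card_insert_of_notMem (by simp), Finset.card_image_of_injective _
      (fun a b h => by simpa [Prod.ext_iff] using h), Finset.card_univ, Fintype.card_fin]

lemma gfg_lower {q n : ℕ} (hq4 : 4 ≤ q) (S : Finset (Option (Fin n × Fin (q-1))))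
    (hS : (genFriendshipGraph q n).IsIndepDomSet ↑S) : n + 1 ≤ S.card := by
  classical
  obtain ⟨hind, hdom⟩ := hS
  -- every petal contains a vertex of S
  have claimA : ∀ i : Fin n, ∃ j : Fin (q-1), some (i, j) ∈ S := by
    intro i
    have hc : (q-2)/2 < q - 1 := by omega
    set c : Fin (q-1) := ⟨(q-2)/2, hc⟩ with hcdef
    by_cases hm : some (i, c) ∈ S
    · exact ⟨c, hm⟩
    · obtain ⟨u, hu, hadj⟩ := hdom (some (i, c)) hm
      match u with
      | none =>
        rw [(genFriendshipGraph q n).adj_comm, gfg_adj_none_some] at hadj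
        simp [hcdef] at hadj; omega
      | some (i', j') =>
        rw [gfg_adj_some_some] at hadj
        obtain ⟨-, ⟨rfl, -⟩ | ⟨rfl, -⟩⟩ := hadj
        · exact ⟨j', hu⟩
        · exact ⟨j', hu⟩
  choose g hg using claimA
  by_cases hnone : none ∈ S
  · -- injection Option (Fin n) ↪ S
    have := Finset.card_le_card_of_injOn (s := (Finset.univ : Finset (Option (Fin n))))
      (fun o : Option (Fin n) => o.map fun i => (i, g i))
      (fun o _ => by
        cases o with
        | none => exact hnone
        | some i => exact hg i)
      (fun a _ b _ h => by
        cases a with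
        | none => cases b with
          | none => rfl
          | some i => simp at h
        | some i => cases b with
          | none => simp at h
          | some i' => simp only [Option.map_some, Option.some.injEq, Prod.mk.injEq] at h; rw [h.1])
    simpa using this
  · -- petal that dominates `none` has two vertices of S
    obtain ⟨u, hu, hadj⟩ := hdom none hnone
    rw [Finset.mem_coe] at hu
    match u with
    | none => exact absurd hadj (genFriendshipGraph q n).irrefl
    | some (i₀, j₀) =>
      rw [gfg_adj_none_some] at hadj
      have claimB : ∃ j₁ : Fin (q-1), some (i₀, j₁) ∈ S ∧ j₁ ≠ j₀ := by
        rcases hadj with h0 | hq2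
        · -- j₀ = 0 : look at the far end vertex (i₀, q-2)
          have hlt : q - 2 < q - 1 := by omega
          set e : Fin (q-1) := ⟨q-2, hlt⟩ with hedef
          by_cases he : some (i₀, e) ∈ S
          · exact ⟨e, he, fun h => by simp [hedef, Fin.ext_iff] at h; omega⟩
          · obtain ⟨u, hu', hadj'⟩ := hdom (some (i₀, e)) he
            match u with
            | none =>
              rw [(genFriendshipGraph q n).adj_comm, gfg_adj_none_some] at hadj'
              exact absurd hu' hnone
            | some (i', j') =>
              rw [gfg_adj_some_some] at hadj'
              obtain ⟨-, ⟨rfl, habs⟩ | ⟨rfl, hval⟩⟩ := hadj'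
              · have := j'.isLt; simp [hedef] at habs; omega
              · refine ⟨j', hu', fun h => ?_⟩
                rw [h] at hu'
                -- then j₀ = q-3, adjacent to... need contradiction with val: e.val = j₀+1 and j₀=0 → q=3
                simp [hedef] at hval; omega
        · -- j₀ = q-2 : look at vertex (i₀, 0)
          have hlt : 0 < q - 1 := by omega
          set z : Fin (q-1) := ⟨0, hlt⟩ with hzdef
          by_cases hz : some (i₀, z) ∈ S
          · exact ⟨z, hz, fun h => by simp [hzdef, Fin.ext_iff] at h; omega⟩
          · obtain ⟨u, hu', hadj'⟩ := hdom (some (i₀, z)) hz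
            match u with
            | none => exact absurd hu' hnone
            | some (i', j') =>
              rw [gfg_adj_some_some] at hadj'
              obtain ⟨-, ⟨rfl, hval⟩ | ⟨rfl, habs⟩⟩ := hadj'
              · refine ⟨j', hu', fun h => ?_⟩
                simp [hzdef] at hval
                rw [h] at hval; omega
              · simp [hzdef] at habs
      obtain ⟨j₁, hj₁, hne⟩ := claimB
      have := Finset.card_le_card_of_injOn (s := (Finset.univ : Finset (Option (Fin n))))
        (fun o : Option (Fin n) => match o with
          | none => some (i₀, j₀)
          | some i => if i = i₀ then some (i₀, j₁) else some (i, g i))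
        (fun o _ => by
          cases o with
          | none => exact hu
          | some i =>
            by_cases h : i = i₀ <;> simp only [h, if_true, if_false, Finset.mem_coe]
            · exact hj₁
            · exact hg i)
        (fun a _ b _ h => by
          cases a with
          | none => cases b with
            | none => rfl
            | some i =>
              dsimp only at h
              by_cases h1 : i = i₀
              · rw [if_pos h1] at h
                simp only [Option.some.injEq, Prod.mk.injEq] at h
                exact absurd h.2.symm hne
              · rw [if_neg h1] at h
                simp only [Option.some.injEq, Prod.mk.injEq] at h
                exact absurd h.1.symm h1
          | some i => cases b with
            | none =>
              dsimp only at h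
              by_cases h1 : i = i₀
              · rw [if_pos h1] at h
                simp only [Option.some.injEq, Prod.mk.injEq] at h
                exact absurd h.2 hne
              · rw [if_neg h1] at h
                simp only [Option.some.injEq, Prod.mk.injEq] at h
                exact absurd h.1 h1
            | some i' =>
              dsimp only at h
              by_cases h1 : i = i₀ <;> by_cases h2 : i' = i₀
              · rw [h1, h2]
              · rw [if_pos h1, if_neg h2] at h
                simp only [Option.some.injEq, Prod.mk.injEq] at h
                exact absurd h.1.symm h2
              · rw [if_neg h1, if_pos h2] at h
                simp only [Option.some.injEq, Prod.mk.injEq] at h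
                exact absurd h.1 h1
              · rw [if_neg h1, if_neg h2] at h
                simp only [Option.some.injEq, Prod.mk.injEq] at h
                rw [h.1])
      simpa using this

/-- For `q ∈ {4,5,6}` the independent domination number of `F_{q,n}` is `n + 1`. -/
theorem stmt4 (q n : ℕ) (hq : q = 4 ∨ q = 5 ∨ q = 6) :
    indepDomNum _ (genFriendshipGraph q n) = n + 1 := by
  have hq4 : 4 ≤ q := by omega
  have hq6 : q ≤ 6 := by omega
  obtain ⟨S, hS, hcard⟩ := gfg_upper (n := n) hq4 hq6
  have hmem : n + 1 ∈ {m | ∃ S : Finset (Option (Fin n × Fin (q-1))),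
      (genFriendshipGraph q n).IsIndepDomSet ↑S ∧ S.card = m} := ⟨S, hS, hcard⟩
  refine le_antisymm (Nat.sInf_le hmem) (le_csInf ⟨n + 1, hmem⟩ ?_)
  rintro b ⟨T, hT, rfl⟩
  exact gfg_lower hq4 T hT
end

section
/- The independent domination number of the book graph B_n (n ≥ 2), defined as the Cartesian product K_{1,n} □ P_2, equals n. -/
open SimpleGraph

lemma book_adj {n : ℕ} (x y : Fin 1 ⊕ Fin n) (j k : Fin 2) :
    ((completeBipartiteGraph (Fin 1) (Fin n)) □ (pathGraph 2)).Adj (x, j) (y, k) ↔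
      (((x.isLeft ∧ y.isRight) ∨ (x.isRight ∧ y.isLeft)) ∧ j = k) ∨
        (j ≠ k ∧ x = y) := by
  rw [boxProd_adj, pathGraph_two_eq_top]
  simp [completeBipartiteGraph]

lemma fin2_cases (j : Fin 2) : j = 0 ∨ j = 1 := by omega

/-- The independent domination number of the book graph
`B_n = K_{1,n} □ P_2` (for `n ≥ 2`) equals `n`. -/
theorem stmt5 (n : ℕ) (hn : 2 ≤ n) :
    indepDomNum _ ((completeBipartiteGraph (Fin 1) (Fin n)) □ (pathGraph 2)) = n := by
  classical
  set ε : Fin n → Fin 2 := fun i => if i.val = 0 then 0 else 1 with hε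
  set S : Finset ((Fin 1 ⊕ Fin n) × Fin 2) :=
    Finset.image (fun i => (Sum.inr i, ε i)) Finset.univ with hS
  have hmemS : ∀ x, x ∈ S ↔ ∃ i, x = (Sum.inr i, ε i) := by
    intro x; simp [hS, eq_comm]
  have hcard : S.card = n := by
    rw [hS, Finset.card_image_of_injective _ (fun a b h => by
      have := congrArg Prod.fst h
      simpa using this)]
    simp
  have hids : ((completeBipartiteGraph (Fin 1) (Fin n)) □ (pathGraph 2)).IsIndepDomSet ↑S := by
    constructor
    · intro u hu v hv huv
      rw [Finset.mem_coe, hmemS] at hu hv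
      obtain ⟨i, rfl⟩ := hu
      obtain ⟨j, rfl⟩ := hv
      have hij : i ≠ j := by rintro rfl; exact huv rfl
      rw [book_adj]
      rintro (⟨(⟨h1,-⟩|⟨-,h1⟩), -⟩ | ⟨-, h2⟩)
      · simp at h1
      · simp at h1
      · exact hij (Sum.inr_injective h2)
    · rintro ⟨x, j⟩ hv
      rw [Finset.mem_coe, hmemS] at hv
      push_neg at hv
      cases x with
      | inl a =>
        refine ⟨(Sum.inr (if j = 0 then ⟨0, by omega⟩ else ⟨1, by omega⟩), j), ?_, ?_⟩
        · rw [Finset.mem_coe, hmemS]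
          refine ⟨if j = 0 then ⟨0, by omega⟩ else ⟨1, by omega⟩, ?_⟩
          rcases fin2_cases j with hj | hj <;> simp [hε, hj]
        · rw [book_adj]; left; exact ⟨Or.inl ⟨rfl, rfl⟩, rfl⟩
      | inr i =>
        refine ⟨(Sum.inr i, ε i), ?_, ?_⟩
        · rw [Finset.mem_coe, hmemS]; exact ⟨i, rfl⟩
        · rw [book_adj]; right
          exact ⟨fun h => hv i (by rw [h]), rfl⟩
  refine le_antisymm (Nat.sInf_le ⟨S, hids, hcard⟩) (le_csInf ⟨n, S, hids, hcard⟩ ?_)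
  rintro m ⟨T, ⟨hind, hdom⟩, rfl⟩
  have key : ∀ i : Fin n, (Sum.inr i, (0:Fin 2)) ∈ T ∨ (Sum.inr i, (1:Fin 2)) ∈ T := by
    intro i
    by_contra h
    push_neg at h
    obtain ⟨h0, h1⟩ := h
    obtain ⟨⟨x, k⟩, hu, hadj⟩ := hdom (Sum.inr i, 0) (by simpa using h0)
    obtain ⟨⟨y, l⟩, hw, hadj'⟩ := hdom (Sum.inr i, 1) (by simpa using h1)
    rw [book_adj] at hadj hadj'
    have hx : x = Sum.inl 0 ∧ k = 0 := by
      rcases hadj with ⟨⟨hl,-⟩|⟨-,hl⟩, h2⟩ | ⟨h2, h3⟩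
      · simp at hl
      · obtain ⟨a, rfl⟩ := Sum.isLeft_iff.mp hl
        exact ⟨by rw [Fin.fin_one_eq_zero a], h2.symm⟩
      · exfalso
        apply h1
        have hk : k = 1 := by
          rcases fin2_cases k with hk | hk
          · exact absurd hk.symm h2
          · exact hk
        rw [h3, ← hk]; exact hu
    have hy : y = Sum.inl 0 ∧ l = 1 := by
      rcases hadj' with ⟨⟨hl,-⟩|⟨-,hl⟩, h2⟩ | ⟨h2, h3⟩
      · simp at hl
      · obtain ⟨a, rfl⟩ := Sum.isLeft_iff.mp hl
        exact ⟨by rw [Fin.fin_one_eq_zero a], h2.symm⟩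
      · exfalso
        apply h0
        have hl' : l = 0 := by
          rcases fin2_cases l with hl2 | hl2
          · exact hl2
          · exact absurd hl2.symm h2
        rw [h3, ← hl']; exact hw
    obtain ⟨rfl, rfl⟩ := hx
    obtain ⟨rfl, rfl⟩ := hy
    refine hind (Finset.mem_coe.mpr hu) (Finset.mem_coe.mpr hw) (by simp) ?_
    rw [book_adj]
    exact Or.inr ⟨by simp, rfl⟩
  set g : Fin n → (Fin 1 ⊕ Fin n) × Fin 2 := fun i =>
    if (Sum.inr i, (0:Fin 2)) ∈ T then (Sum.inr i, 0) else (Sum.inr i, 1) with hg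
  have hmaps : ∀ i ∈ Finset.univ, g i ∈ T := by
    intro i _
    rw [hg]
    by_cases hi : (Sum.inr i, (0:Fin 2)) ∈ T
    · simp [hi]
    · rcases key i with h | h
      · exact absurd h hi
      · simpa [hi] using h
  have hinj : Set.InjOn g ↑(Finset.univ : Finset (Fin n)) := by
    intro a _ b _ hab
    have : (g a).1 = (g b).1 := by rw [hab]
    rw [hg] at this
    by_cases ha : (Sum.inr a, (0:Fin 2)) ∈ T <;> by_cases hb : (Sum.inr b, (0:Fin 2)) ∈ T <;>
      simp [ha, hb] at this <;> exact this
  calc n = (Finset.univ : Finset (Fin n)).card := by simp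
    _ ≤ T.card := Finset.card_le_card_of_injOn g hmaps hinj
end

section
/- The independent domination stability of the book graph B_n = K_{1,n} □ P_2 equals 2. -/
/-!
Write the vertices of `B_n` as centres `(0, t)` and leaves `(i, t)` with `t : Fin 2`. If both
leaves of page `i` survive, an independent dominating set contains one of them: otherwise both
are dominated by the two centres, which are adjacent. This gives `γᵢ(B_n) = n`, and it stays `n`
after deleting any single vertex. Deleting the two leaves `(i₀, 0)` and `(i₁, 0)` makes room for
`{(0, 1)} ∪ {(i, 0) | i ≠ i₀, i₁}`, of size `n - 1`.
-/

open SimpleGraph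

namespace SimpleGraph

variable {V : Type*} {G : SimpleGraph V}

/-- The independent dominating sets of `G.induce s`, viewed as sets of vertices of `G`. -/
def IsIndepDomSetIn (G : SimpleGraph V) (s S : Set V) : Prop :=
  S ⊆ s ∧ G.IsIndepSet S ∧ ∀ v ∈ s, v ∉ S → ∃ u ∈ S, G.Adj v u

theorem isIndepDomSetIn_univ {S : Set V} :
    G.IsIndepDomSetIn Set.univ S ↔ G.IsIndepDomSet S := by
  simp [IsIndepDomSetIn, IsIndepDomSet, IsIndepSet]

theorem IsIndepDomSetIn.mono {s t S : Set V} (h : G.IsIndepDomSetIn s S) (hS : S ⊆ t)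
    (ht : t ⊆ s) : G.IsIndepDomSetIn t S :=
  ⟨hS, h.2.1, fun v hv => h.2.2 v (ht hv)⟩

theorem isIndepDomSet_induce_iff {s : Set V} {S : Set s} :
    (G.induce s).IsIndepDomSet S ↔ G.IsIndepDomSetIn s (Subtype.val '' S) := by
  simp only [IsIndepDomSet, IsIndepDomSetIn, IsIndepSet, Set.Pairwise]
  aesop

theorem _root_.Maximal.isIndepDomSet {S : Set V} (h : Maximal G.IsIndepSet S) :
    G.IsIndepDomSet S := by
  refine ⟨h.prop, fun v hv => ?_⟩
  by_contra! hnadj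
  exact hv (h.mem_of_prop_insert (h.prop.insert fun u hu _ =>
    ⟨hnadj u hu, fun hadj => hnadj u hu hadj.symm⟩))

theorem exists_isIndepDomSet [Finite V] : ∃ S : Finset V, G.IsIndepDomSet S := by
  obtain ⟨S, hS⟩ := G.maximumIndepSet_exists
  exact ⟨S, (hS.isMaximalIndepSet S).isIndepDomSet⟩

theorem indepDomNum_le [Fintype V] {S : Finset V} (h : G.IsIndepDomSet S) :
    indepDomNum V G ≤ S.card :=
  Nat.sInf_le ⟨S, h, rfl⟩

theorem le_indepDomNum [Fintype V] {m : ℕ}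
    (h : ∀ S : Finset V, G.IsIndepDomSet S → m ≤ S.card) : m ≤ indepDomNum V G := by
  obtain ⟨S, hS⟩ := G.exists_isIndepDomSet
  refine le_csInf ⟨_, S, hS, rfl⟩ ?_
  rintro _ ⟨T, hT, rfl⟩
  exact h T hT

theorem indepDomNum_induce_le {s : Set V} [Fintype s] {S : Finset V}
    (h : G.IsIndepDomSetIn s S) : indepDomNum s (G.induce s) ≤ S.card := by
  classical
  have hS : (S.subtype (· ∈ s)).map (Function.Embedding.subtype _) = S :=
    Finset.subtype_map_of_mem fun v hv => h.1 hv
  rw [← hS, Finset.card_map]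
  refine indepDomNum_le (isIndepDomSet_induce_iff.2 ?_)
  rwa [← Function.Embedding.coe_subtype, ← Finset.coe_map, hS]

theorem le_indepDomNum_induce {s : Set V} [Fintype s] {m : ℕ}
    (h : ∀ S : Finset V, G.IsIndepDomSetIn s S → m ≤ S.card) :
    m ≤ indepDomNum s (G.induce s) :=
  le_indepDomNum fun T hT => by
    simpa using h (T.map (Function.Embedding.subtype _))
      (by simpa using isIndepDomSet_induce_iff.1 hT)

theorem idStability_eq_two [Fintype V] [DecidableEq V] {A : Finset V} (hA : A.card = 2)
    (hchange : indepDomNum _ (G.induce (↑(Aᶜ) : Set V)) ≠ indepDomNum V G)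
    (hstable : ∀ x : V,
      indepDomNum _ (G.induce (↑(({x} : Finset V)ᶜ) : Set V)) = indepDomNum V G) :
    idStability V G = 2 := by
  have h2 : 2 ∈ {k | ∃ A : Finset V, A.card = k ∧ A.Nonempty ∧
      indepDomNum _ (G.induce (↑(Aᶜ) : Set V)) ≠ indepDomNum V G} :=
    ⟨A, hA, Finset.card_pos.1 (by omega), hchange⟩
  refine le_antisymm (Nat.sInf_le h2) (le_csInf ⟨2, h2⟩ ?_)
  rintro k ⟨B, rfl, hB, hBchange⟩
  by_contra! hk
  obtain ⟨x, rfl⟩ := Finset.card_eq_one.1 (le_antisymm (by omega) hB.card_pos)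
  exact hBchange (hstable x)

end SimpleGraph

theorem exists_surjective_fin_two {ι : Type*} [Nontrivial ι] :
    ∃ g : ι → Fin 2, Function.Surjective g := by
  classical
  obtain ⟨i₀, i₁, h⟩ := exists_pair_ne ι
  refine ⟨fun i => if i = i₀ then 0 else 1, fun t => ?_⟩
  fin_cases t
  exacts [⟨i₀, by simp⟩, ⟨i₁, by simp [h.symm]⟩]

namespace Book

open Finset

variable {ι : Type*}

/-- The book graph with pages indexed by `ι`: the centres are `(Sum.inl 0, t)`, the leaves
`(Sum.inr i, t)`, and `t : Fin 2` is the level in the factor `P₂`. -/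
abbrev bookGraph (ι : Type*) : SimpleGraph ((Fin 1 ⊕ ι) × Fin 2) :=
  completeBipartiteGraph (Fin 1) ι □ pathGraph 2

@[simp]
theorem adj_inl_inl {a b : Fin 1} {s t : Fin 2} :
    (bookGraph ι).Adj (Sum.inl a, s) (Sum.inl b, t) ↔ s ≠ t := by
  obtain rfl := Subsingleton.elim a b
  simp [boxProd_adj, pathGraph_two_eq_top]

@[simp]
theorem adj_inl_inr {a : Fin 1} {i : ι} {s t : Fin 2} :
    (bookGraph ι).Adj (Sum.inl a, s) (Sum.inr i, t) ↔ s = t := by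
  simp [boxProd_adj, pathGraph_two_eq_top]

@[simp]
theorem adj_inr_inl {a : Fin 1} {i : ι} {s t : Fin 2} :
    (bookGraph ι).Adj (Sum.inr i, s) (Sum.inl a, t) ↔ s = t := by
  simp [boxProd_adj, pathGraph_two_eq_top]

@[simp]
theorem adj_inr_inr {i j : ι} {s t : Fin 2} :
    (bookGraph ι).Adj (Sum.inr i, s) (Sum.inr j, t) ↔ i = j ∧ s ≠ t := by
  simp [boxProd_adj, pathGraph_two_eq_top, and_comm]

theorem injective_inr_prod (f : ι → Fin 2) :
    Function.Injective fun i => (Sum.inr (α := Fin 1) i, f i) :=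
  fun _ _ h => Sum.inr_injective (congrArg Prod.fst h)

variable {s S : Set ((Fin 1 ⊕ ι) × Fin 2)}

theorem exists_ne_mem_or_inl_mem (hS : (bookGraph ι).IsIndepDomSetIn s S) {i : ι} {t : Fin 2}
    (hs : (Sum.inr i, t) ∈ s) (hS' : (Sum.inr i, t) ∉ S) :
    (∃ t', t' ≠ t ∧ (Sum.inr i, t') ∈ S) ∨ (Sum.inl 0, t) ∈ S := by
  obtain ⟨⟨a | j, t'⟩, hu, hadj⟩ := hS.2.2 _ hs hS'
  · obtain rfl := Subsingleton.elim a 0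
    simp only [adj_inr_inl] at hadj
    exact .inr (hadj ▸ hu)
  · obtain ⟨rfl, hne⟩ := adj_inr_inr.1 hadj
    exact .inl ⟨t', hne.symm, hu⟩

theorem exists_inr_mem (hS : (bookGraph ι).IsIndepDomSetIn s S) (i : ι)
    (h₀ : (Sum.inr i, 0) ∈ s) (h₁ : (Sum.inr i, 1) ∈ s) : ∃ t, (Sum.inr i, t) ∈ S := by
  by_contra! h
  have hinl : ∀ t, (Sum.inr i, t) ∈ s → (Sum.inl 0, t) ∈ S := fun t hs =>
    ((exists_ne_mem_or_inl_mem hS hs (h t)).resolve_left fun ⟨t', _, ht'⟩ => h t' ht')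
  exact hS.2.1 (hinl 0 h₀) (hinl 1 h₁) (by simp) (adj_inl_inl.2 (by decide))

variable [Fintype ι] {S : Finset ((Fin 1 ⊕ ι) × Fin 2)}

theorem card_le_of_forall_inr_mem (hS : (bookGraph ι).IsIndepDomSetIn s S)
    (hs : ∀ i t, (Sum.inr i, t) ∈ s) : Fintype.card ι ≤ S.card := by
  choose τ hτ using fun i => exists_inr_mem hS i (hs i 0) (hs i 1)
  simpa using card_le_card_of_injOn (s := univ) _ (fun i _ => hτ i)
    (injective_inr_prod τ).injOn

/-- After deleting the leaf `(j, t)`, page `j` still needs its own vertex of `S`: the other leaf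
`(j, t')` or the centre `(0, t')` dominating it. Sending the centres to `j` makes every page hit. -/
theorem card_le_of_compl_inr {j : ι} {t : Fin 2}
    (hS : (bookGraph ι).IsIndepDomSetIn {(Sum.inr j, t)}ᶜ S) : Fintype.card ι ≤ S.card := by
  classical
  refine card_le_card_of_surjOn (fun v => v.1.elim (fun _ => j) id) fun i _ => ?_
  by_cases hij : i = j
  · subst hij
    obtain ⟨t', ht'⟩ := exists_ne t
    have hs : (Sum.inr i, t') ∈ ({(Sum.inr i, t)}ᶜ : Set ((Fin 1 ⊕ ι) × Fin 2)) := by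
      simpa using ht'
    by_cases hmem : (Sum.inr i, t') ∈ S
    · exact ⟨_, hmem, rfl⟩
    obtain ⟨t'', ht'', hmem''⟩ | hinl := exists_ne_mem_or_inl_mem hS hs hmem
    · exact absurd (hS.1 hmem'') (by simp; omega)
    · exact ⟨_, hinl, rfl⟩
  · obtain ⟨t', ht'⟩ := exists_inr_mem hS i (by simp [hij]) (by simp [hij])
    exact ⟨_, ht', rfl⟩

variable [DecidableEq ι]

theorem card_image_inr (g : ι → Fin 2) :
    (univ.image fun i => (Sum.inr (α := Fin 1) i, g i)).card = Fintype.card ι := by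
  rw [card_image_of_injective _ (injective_inr_prod g), card_univ]

theorem card_insert_inl_image_inr (R : Finset ι) (t t' : Fin 2) :
    (insert (Sum.inl 0, t') (Rᶜ.image fun i => (Sum.inr (α := Fin 1) i, t))).card =
      Fintype.card ι - R.card + 1 := by
  rw [card_insert_of_notMem (by simp), card_image_of_injective _ (injective_inr_prod _),
    card_compl]

theorem isIndepDomSetIn_univ_image_inr {g : ι → Fin 2} (hg : Function.Surjective g) :
    (bookGraph ι).IsIndepDomSetIn Set.univ
      ↑(univ.image fun i => (Sum.inr (α := Fin 1) i, g i)) := by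
  refine ⟨Set.subset_univ _, ?_, ?_⟩
  · rintro _ hu _ hv hne hadj
    simp only [coe_image, coe_univ, Set.image_univ, Set.mem_range] at hu hv
    obtain ⟨i, rfl⟩ := hu
    obtain ⟨j, rfl⟩ := hv
    obtain ⟨rfl, -⟩ := adj_inr_inr.1 hadj
    exact hne rfl
  · rintro ⟨a | i, t⟩ - hv
    · obtain ⟨i, rfl⟩ := hg t
      exact ⟨(Sum.inr i, g i), by simp, adj_inl_inr.2 rfl⟩
    · exact ⟨(Sum.inr i, g i), by simp, adj_inr_inr.2 ⟨rfl, fun h => hv (by simp [h])⟩⟩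

theorem isIndepDomSetIn_compl_image_inr (R : Finset ι) {t t' : Fin 2} (ht : t ≠ t') :
    (bookGraph ι).IsIndepDomSetIn ↑((R.image fun i => (Sum.inr (α := Fin 1) i, t))ᶜ)
      ↑(insert (Sum.inl 0, t') (Rᶜ.image fun i => (Sum.inr (α := Fin 1) i, t))) := by
  refine ⟨?_, ?_, ?_⟩
  · intro v hv
    aesop
  · rintro u hu v hv hne hadj
    simp only [coe_insert, coe_image, coe_compl, Set.mem_insert_iff, Set.mem_image,
      Set.mem_compl_iff, SetLike.mem_coe] at hu hv
    rcases hu with rfl | ⟨i, hi, rfl⟩ <;> rcases hv with rfl | ⟨j, hj, rfl⟩ <;> simp_all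
  · rintro ⟨a | i, u⟩ hs hv
    · obtain rfl := Subsingleton.elim a 0
      exact ⟨(Sum.inl 0, t'), by simp, adj_inl_inl.2 fun h => hv (by simp [h])⟩
    · have hu : u = t' := by
        by_contra hu
        have hut : u = t := by omega
        subst hut
        simp_all
      exact ⟨(Sum.inl 0, t'), by simp, adj_inr_inl.2 hu⟩

theorem indepDomNum_bookGraph [Nontrivial ι] :
    indepDomNum _ (bookGraph ι) = Fintype.card ι := by
  obtain ⟨g, hg⟩ := exists_surjective_fin_two (ι := ι)
  refine le_antisymm ?_ (le_indepDomNum fun S hS =>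
    card_le_of_forall_inr_mem (isIndepDomSetIn_univ.2 hS) (by simp))
  calc indepDomNum _ (bookGraph ι) ≤ _ :=
        indepDomNum_le (isIndepDomSetIn_univ.1 (isIndepDomSetIn_univ_image_inr hg))
    _ = Fintype.card ι := card_image_inr g

theorem indepDomNum_induce_compl_singleton [Nontrivial ι] (x : (Fin 1 ⊕ ι) × Fin 2) :
    indepDomNum _ ((bookGraph ι).induce ↑(({x} : Finset _)ᶜ)) = Fintype.card ι := by
  obtain ⟨a | j, t⟩ := x
  · obtain ⟨g, hg⟩ := exists_surjective_fin_two (ι := ι)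
    refine le_antisymm ?_ (le_indepDomNum_induce fun S hS =>
      card_le_of_forall_inr_mem hS (by simp))
    have hS := (isIndepDomSetIn_univ_image_inr hg).mono
      (t := ↑(({(Sum.inl a, t)} : Finset ((Fin 1 ⊕ ι) × Fin 2))ᶜ)) (by simp)
      (Set.subset_univ _)
    calc _ ≤ _ := indepDomNum_induce_le hS
      _ = Fintype.card ι := card_image_inr g
  · refine le_antisymm ?_ (le_indepDomNum_induce fun S hS =>
      card_le_of_compl_inr (j := j) (t := t) (by simpa using hS))
    obtain ⟨t', ht'⟩ := exists_ne t
    have hS := isIndepDomSetIn_compl_image_inr {j} ht'.symm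
    rw [image_singleton] at hS
    calc _ ≤ _ := indepDomNum_induce_le hS
      _ = Fintype.card ι := by
        rw [card_insert_inl_image_inr, card_singleton]
        have := Fintype.card_pos (α := ι)
        omega

theorem indepDomNum_induce_compl_pair_lt {i₀ i₁ : ι} (h : i₀ ≠ i₁) :
    indepDomNum _ ((bookGraph ι).induce
      ↑(({(Sum.inr i₀, 0), (Sum.inr i₁, 0)} : Finset ((Fin 1 ⊕ ι) × Fin 2))ᶜ)) <
      Fintype.card ι := by
  have hcard : 2 ≤ Fintype.card ι := card_pair h ▸ card_le_univ _
  have hS := isIndepDomSetIn_compl_image_inr {i₀, i₁} (zero_ne_one (α := Fin 2))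
  rw [image_insert, image_singleton] at hS
  calc _ ≤ _ := indepDomNum_induce_le hS
    _ < Fintype.card ι := by
        rw [card_insert_inl_image_inr, card_pair h]
        omega

end Book

open Book in
/-- The independent domination stability of the book graph
`B_n = K_{1,n} □ P_2` equals 2. -/
theorem stmt7 (n : ℕ) (hn : 2 ≤ n) :
    idStability _ ((completeBipartiteGraph (Fin 1) (Fin n)) □ (pathGraph 2)) = 2 := by
  have : Nontrivial (Fin n) := Fin.nontrivial_iff_two_le.2 hn
  obtain ⟨i₀, i₁, hi⟩ := exists_pair_ne (Fin n)
  refine SimpleGraph.idStability_eq_two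
    (Finset.card_pair ((injective_inr_prod fun _ => 0).ne hi)) ?_ fun x => ?_
  · rw [indepDomNum_bookGraph]
    exact (indepDomNum_induce_compl_pair_lt hi).ne
  · rw [indepDomNum_induce_compl_singleton, indepDomNum_bookGraph]
end

section
/- For the path P_n (n ≥ 2): st_id(P_n) = 2 if n ≡ 2 (mod 3), and st_id(P_n) = 1 otherwise. -/
/-!
A minimum independent dominating set of a path on `m` vertices takes every third vertex, starting
from the second one and moving the last one to the end if needed, and no smaller set works because
a vertex dominates at most three vertices; so `γᵢ(P_m) = ⌊(m + 2) / 3⌋`. The count applies to each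
segment of an induced subgraph of a path. Deleting a vertex `v` splits `P_n` into `P_v` and
`P_{n-1-v}`, and `⌊(v + 2) / 3⌋ + ⌊(n - v + 1) / 3⌋ = ⌊(n + 2) / 3⌋` for every `v` exactly when
`n ≡ 2 (mod 3)`; in that case deleting the first two vertices leaves `P_{n-2}`, whose `γᵢ` is one
smaller.
-/

open SimpleGraph

namespace Nat

/-- Clamping to `b - 1` keeps the last vertex dominated when `b - a ≡ 1 (mod 3)`. -/
def pathIndepDomSet (a b : ℕ) : Finset ℕ :=
  (Finset.range ((b - a + 2) / 3)).image fun k => min (a + 1 + 3 * k) (b - 1)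

lemma mem_pathIndepDomSet {a b i : ℕ} :
    i ∈ pathIndepDomSet a b ↔ ∃ k < (b - a + 2) / 3, min (a + 1 + 3 * k) (b - 1) = i := by
  simp [pathIndepDomSet]

lemma card_pathIndepDomSet (a b : ℕ) : (pathIndepDomSet a b).card = (b - a + 2) / 3 := by
  refine (Finset.card_image_of_injOn fun k hk l hl hkl => ?_).trans (Finset.card_range _)
  simp only [Finset.coe_range, Set.mem_Iio] at hk hl hkl
  omega

lemma pathIndepDomSet_subset_Ico (a b : ℕ) : pathIndepDomSet a b ⊆ Finset.Ico a b := by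
  intro i hi
  obtain ⟨k, hk, rfl⟩ := mem_pathIndepDomSet.1 hi
  simp only [Finset.mem_Ico]
  omega

lemma succ_notMem_pathIndepDomSet {a b i : ℕ} (hi : i ∈ pathIndepDomSet a b) :
    i + 1 ∉ pathIndepDomSet a b := by
  intro hi'
  obtain ⟨k, hk, rfl⟩ := mem_pathIndepDomSet.1 hi
  obtain ⟨l, hl, hkl⟩ := mem_pathIndepDomSet.1 hi'
  omega

lemma exists_mem_pathIndepDomSet_near {a b u : ℕ} (hu : u ∈ Finset.Ico a b) :
    ∃ s ∈ pathIndepDomSet a b, u ≤ s + 1 ∧ s ≤ u + 1 := by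
  rw [Finset.mem_Ico] at hu
  exact ⟨_, mem_pathIndepDomSet.2 ⟨(u - a) / 3, by omega, rfl⟩, by omega, by omega⟩

lemma card_le_three_mul_card_of_near {U T : Finset ℕ}
    (h : ∀ u ∈ U, ∃ t ∈ T, u ≤ t + 1 ∧ t ≤ u + 1) : U.card ≤ 3 * T.card := by
  have hU : U ⊆ T.biUnion fun t => Finset.Icc (t - 1) (t + 1) := by
    intro u hu
    obtain ⟨t, ht, hut⟩ := h u hu
    exact Finset.mem_biUnion.2 ⟨t, ht, Finset.mem_Icc.2 (by omega)⟩
  calc U.card ≤ T.card * 3 :=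
        (Finset.card_le_card hU).trans <| Finset.card_biUnion_le_card_mul _ _ _ fun t _ => by
          rw [Nat.card_Icc]; omega
    _ = 3 * T.card := mul_comm _ _

lemma succ_notMem_pathIndepDomSet_union {a b c d i : ℕ} (hbc : b < c)
    (hi : i ∈ pathIndepDomSet a b ∪ pathIndepDomSet c d) :
    i + 1 ∉ pathIndepDomSet a b ∪ pathIndepDomSet c d := by
  have hab := pathIndepDomSet_subset_Ico a b
  have hcd := pathIndepDomSet_subset_Ico c d
  rw [Finset.mem_union] at hi ⊢
  rintro (hi' | hi') <;> rcases hi with hi | hi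
  · exact succ_notMem_pathIndepDomSet hi hi'
  · have := Finset.mem_Ico.1 (hab hi'); have := Finset.mem_Ico.1 (hcd hi); omega
  · have := Finset.mem_Ico.1 (hcd hi'); have := Finset.mem_Ico.1 (hab hi); omega
  · exact succ_notMem_pathIndepDomSet hi hi'

lemma disjoint_pathIndepDomSet {a b c d : ℕ} (hbc : b < c) :
    Disjoint (pathIndepDomSet a b) (pathIndepDomSet c d) :=
  Finset.disjoint_left.2 fun i hab hcd => by
    have := Finset.mem_Ico.1 (pathIndepDomSet_subset_Ico a b hab)
    have := Finset.mem_Ico.1 (pathIndepDomSet_subset_Ico c d hcd)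
    omega

end Nat

lemma sub_le_three_mul_card_filter {V : Type*} {S : Finset V} {f : V → ℕ}
    (hnear : ∀ x, ∃ y ∈ S, f x ≤ f y + 1 ∧ f y ≤ f x + 1) {p q : ℕ}
    (hpq : ∀ u ∈ Finset.Ico p q, u ∈ Set.range f)
    (hclosed : ∀ y, ∀ u ∈ Finset.Ico p q, u ≤ f y + 1 → f y ≤ u + 1 → f y ∈ Finset.Ico p q) :
    q - p ≤ 3 * (S.filter fun x => f x ∈ Finset.Ico p q).card := by
  classical
  calc q - p = (Finset.Ico p q).card := (Nat.card_Ico p q).symm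
    _ ≤ 3 * ((S.filter fun x => f x ∈ Finset.Ico p q).image f).card := by
      refine Nat.card_le_three_mul_card_of_near fun u hu => ?_
      obtain ⟨x, rfl⟩ := hpq u hu
      obtain ⟨y, hyS, hxy⟩ := hnear x
      exact ⟨f y, Finset.mem_image_of_mem f
        (Finset.mem_filter.2 ⟨hyS, hclosed y _ hu hxy.1 hxy.2⟩), hxy⟩
    _ ≤ 3 * (S.filter fun x => f x ∈ Finset.Ico p q).card :=
      Nat.mul_le_mul_left 3 Finset.card_image_le

namespace SimpleGraph

variable {V : Type*} {G : SimpleGraph V}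

lemma indepDomNum_eq_of_isIndepDomSet [Fintype V] {S₀ : Finset V} (h₀ : G.IsIndepDomSet ↑S₀)
    (hmin : ∀ S : Finset V, G.IsIndepDomSet ↑S → S₀.card ≤ S.card) :
    indepDomNum V G = S₀.card :=
  le_antisymm (Nat.sInf_le ⟨S₀, h₀, rfl⟩) (le_csInf ⟨_, S₀, h₀, rfl⟩ <| by
    rintro _ ⟨S, hS, rfl⟩
    exact hmin S hS)

/-- `f` identifies `G` with the subgraph of the path on `ℕ` induced by `[a, b) ∪ [c, d)`;
`b < c` keeps the two segments apart. -/
structure IsTwoSegmentPath (G : SimpleGraph V) (f : V → ℕ) (a b c d : ℕ) : Prop where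
  injective : Function.Injective f
  adj_iff : ∀ x y, G.Adj x y ↔ f x + 1 = f y ∨ f y + 1 = f x
  mem_range_iff : ∀ m, m ∈ Set.range f ↔ m ∈ Finset.Ico a b ∨ m ∈ Finset.Ico c d
  lt : b < c

namespace IsTwoSegmentPath

variable {f : V → ℕ} {a b c d : ℕ}

lemma exists_near {S : Finset V} (h : G.IsTwoSegmentPath f a b c d) (hS : G.IsIndepDomSet ↑S)
    (x : V) : ∃ y ∈ S, f x ≤ f y + 1 ∧ f y ≤ f x + 1 := by
  by_cases hx : x ∈ S
  · exact ⟨x, hx, by omega, by omega⟩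
  · obtain ⟨y, hy, hxy⟩ := hS.2 x hx
    have := (h.adj_iff x y).1 hxy
    exact ⟨y, hy, by omega, by omega⟩

lemma le_card {S : Finset V} (h : G.IsTwoSegmentPath f a b c d) (hS : G.IsIndepDomSet ↑S) :
    (b - a + 2) / 3 + (d - c + 2) / 3 ≤ S.card := by
  classical
  -- the gap `b < c` stops a vertex of one segment from dominating a vertex of the other
  have hclosed : ∀ y u, u ≤ f y + 1 → f y ≤ u + 1 →
      (u ∈ Finset.Ico a b → f y ∈ Finset.Ico a b) ∧
        (u ∈ Finset.Ico c d → f y ∈ Finset.Ico c d) := by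
    intro y u h₁ h₂
    have := h.lt
    rcases (h.mem_range_iff (f y)).1 ⟨y, rfl⟩ with hy | hy <;>
      simp only [Finset.mem_Ico] at hy ⊢ <;> omega
  have hab := sub_le_three_mul_card_filter (h.exists_near hS) (p := a) (q := b)
    (fun u hu => (h.mem_range_iff u).2 (Or.inl hu)) fun y u hu h₁ h₂ => (hclosed y u h₁ h₂).1 hu
  have hcd := sub_le_three_mul_card_filter (h.exists_near hS) (p := c) (q := d)
    (fun u hu => (h.mem_range_iff u).2 (Or.inr hu)) fun y u hu h₁ h₂ => (hclosed y u h₁ h₂).2 hu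
  have hsplit : (S.filter fun x => f x ∈ Finset.Ico a b).card
      + (S.filter fun x => f x ∈ Finset.Ico c d).card ≤ S.card := by
    rw [← Finset.card_union_of_disjoint (Finset.disjoint_filter.2 fun x _ hx hx' => by
      have := h.lt; simp only [Finset.mem_Ico] at hx hx'; omega)]
    exact Finset.card_le_card
      (Finset.union_subset (Finset.filter_subset _ _) (Finset.filter_subset _ _))
  omega

lemma mem_range_of_mem_pathIndepDomSet (h : G.IsTwoSegmentPath f a b c d) {s : ℕ}
    (hs : s ∈ Nat.pathIndepDomSet a b ∪ Nat.pathIndepDomSet c d) : s ∈ Set.range f := by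
  refine (h.mem_range_iff s).2 ?_
  rcases Finset.mem_union.1 hs with hs | hs
  exacts [Or.inl (Nat.pathIndepDomSet_subset_Ico a b hs),
    Or.inr (Nat.pathIndepDomSet_subset_Ico c d hs)]

lemma isIndepDomSet_preimage_pathIndepDomSet (h : G.IsTwoSegmentPath f a b c d) :
    G.IsIndepDomSet
      ↑((Nat.pathIndepDomSet a b ∪ Nat.pathIndepDomSet c d).preimage f h.injective.injOn) := by
  rw [Finset.coe_preimage]
  refine ⟨fun x hx y hy _ hxy => ?_, fun x hx => ?_⟩
  · rcases (h.adj_iff x y).1 hxy with hxy | hxy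
    · exact Nat.succ_notMem_pathIndepDomSet_union h.lt hx (hxy ▸ hy)
    · exact Nat.succ_notMem_pathIndepDomSet_union h.lt hy (hxy ▸ hx)
  · obtain ⟨s, hs, hsx⟩ : ∃ s ∈ Nat.pathIndepDomSet a b ∪ Nat.pathIndepDomSet c d,
        f x ≤ s + 1 ∧ s ≤ f x + 1 := by
      rcases (h.mem_range_iff (f x)).1 ⟨x, rfl⟩ with hx' | hx'
      · obtain ⟨s, hs, hsx⟩ := Nat.exists_mem_pathIndepDomSet_near hx'
        exact ⟨s, Finset.mem_union_left _ hs, hsx⟩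
      · obtain ⟨s, hs, hsx⟩ := Nat.exists_mem_pathIndepDomSet_near hx'
        exact ⟨s, Finset.mem_union_right _ hs, hsx⟩
    obtain ⟨y, rfl⟩ := h.mem_range_of_mem_pathIndepDomSet hs
    have hxy : f x ≠ f y := fun hxy => hx (show f x ∈ _ from hxy ▸ hs)
    exact ⟨y, hs, (h.adj_iff x y).2 (by omega)⟩

lemma indepDomNum_eq [Fintype V] (h : G.IsTwoSegmentPath f a b c d) :
    indepDomNum V G = (b - a + 2) / 3 + (d - c + 2) / 3 := by
  classical
  have hcard :
      ((Nat.pathIndepDomSet a b ∪ Nat.pathIndepDomSet c d).preimage f h.injective.injOn).card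
        = (b - a + 2) / 3 + (d - c + 2) / 3 := by
    rw [Finset.card_preimage,
      Finset.filter_true_of_mem fun _ => h.mem_range_of_mem_pathIndepDomSet,
      Finset.card_union_of_disjoint (Nat.disjoint_pathIndepDomSet h.lt), Nat.card_pathIndepDomSet,
      Nat.card_pathIndepDomSet]
  rw [← hcard]
  exact indepDomNum_eq_of_isIndepDomSet h.isIndepDomSet_preimage_pathIndepDomSet fun S hS =>
    hcard ▸ h.le_card hS

end IsTwoSegmentPath

lemma isTwoSegmentPath_pathGraph (n : ℕ) :
    (pathGraph n).IsTwoSegmentPath Fin.val 0 n (n + 1) (n + 1) where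
  injective := Fin.val_injective
  adj_iff _ _ := pathGraph_adj
  mem_range_iff m := by
    simp only [Finset.mem_Ico, Set.mem_range]
    exact ⟨by rintro ⟨x, rfl⟩; omega, fun hm => ⟨⟨m, by omega⟩, rfl⟩⟩
  lt := n.lt_succ_self

lemma isTwoSegmentPath_induce_pathGraph {n a b c d : ℕ} {s : Set (Fin n)} (hbc : b < c)
    (hbn : b ≤ n) (hdn : d ≤ n)
    (hs : ∀ x : Fin n, x ∈ s ↔ x.val ∈ Finset.Ico a b ∨ x.val ∈ Finset.Ico c d) :
    ((pathGraph n).induce s).IsTwoSegmentPath (fun x => x.val.val) a b c d where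
  injective _ _ hxy := Subtype.ext (Fin.ext hxy)
  adj_iff _ _ := pathGraph_adj
  mem_range_iff m := by
    refine ⟨by rintro ⟨x, rfl⟩; exact (hs x).1 x.2, fun hm => ?_⟩
    have hmn : m < n := by simp only [Finset.mem_Ico] at hm; omega
    exact ⟨⟨⟨m, hmn⟩, (hs _).2 hm⟩, rfl⟩
  lt := hbc

lemma indepDomNum_pathGraph (n : ℕ) : indepDomNum (Fin n) (pathGraph n) = (n + 2) / 3 := by
  rw [(isTwoSegmentPath_pathGraph n).indepDomNum_eq]
  omega

lemma indepDomNum_induce_compl_singleton_pathGraph {n : ℕ} (v : Fin n) :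
    indepDomNum _ ((pathGraph n).induce (↑(({v} : Finset (Fin n))ᶜ) : Set (Fin n)))
      = (v.val + 2) / 3 + (n - v.val + 1) / 3 := by
  have hv := v.isLt
  rw [(isTwoSegmentPath_induce_pathGraph (a := 0) (b := v) (c := v + 1) (d := n)
    (Nat.lt_succ_self _) hv.le le_rfl fun x => ?_).indepDomNum_eq]
  · omega
  · simp only [Finset.coe_compl, Finset.coe_singleton, Set.mem_compl_iff, Set.mem_singleton_iff,
      Finset.mem_Ico, ← Fin.val_inj]
    omega

lemma indepDomNum_induce_compl_pair_pathGraph {n : ℕ} (hn : 2 ≤ n) :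
    indepDomNum _ ((pathGraph n).induce
      (↑(({⟨0, by omega⟩, ⟨1, by omega⟩} : Finset (Fin n))ᶜ) : Set (Fin n))) = n / 3 := by
  rw [(isTwoSegmentPath_induce_pathGraph (a := 0) (b := 0) (c := 2) (d := n)
    two_pos (Nat.zero_le n) le_rfl fun x => ?_).indepDomNum_eq]
  · omega
  · simp only [Finset.coe_compl, Finset.coe_insert, Finset.coe_singleton, Set.mem_compl_iff,
      Set.mem_insert_iff, Set.mem_singleton_iff, Finset.mem_Ico, ← Fin.val_inj]
    omega

lemma idStability_eq {V : Type*} [Fintype V] [DecidableEq V] {G : SimpleGraph V}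
    {k : ℕ} {A₀ : Finset V} (hA₀ : A₀.card = k) (hA₀ne : A₀.Nonempty)
    (hchange : indepDomNum _ (G.induce (↑(A₀ᶜ) : Set V)) ≠ indepDomNum V G)
    (hstable : ∀ A : Finset V, A.Nonempty → A.card < k →
      indepDomNum _ (G.induce (↑(Aᶜ) : Set V)) = indepDomNum V G) :
    idStability V G = k := by
  refine IsLeast.csInf_eq ⟨⟨A₀, hA₀, hA₀ne, hchange⟩, ?_⟩
  rintro _ ⟨A, rfl, hA, hne⟩
  by_contra hlt
  exact hne (hstable A hA (not_le.1 hlt))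

end SimpleGraph

/-- For the path `P_n` (`n ≥ 2`): `st_id(P_n) = 2` if `n ≡ 2 (mod 3)`, and
`st_id(P_n) = 1` otherwise. -/
theorem stmt11 (n : ℕ) (hn : 2 ≤ n) :
    idStability _ (pathGraph n) = if n % 3 = 2 then 2 else 1 := by
  split_ifs with hmod
  · refine idStability_eq (A₀ := {⟨0, by omega⟩, ⟨1, by omega⟩})
      (Finset.card_pair (by simp [Fin.ext_iff])) (Finset.insert_nonempty _ _) ?_
      fun A hA hcard => ?_
    · rw [indepDomNum_induce_compl_pair_pathGraph hn, indepDomNum_pathGraph]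
      omega
    · obtain ⟨v, rfl⟩ : ∃ v, A = {v} := Finset.card_eq_one.1 (by have := hA.card_pos; omega)
      rw [indepDomNum_induce_compl_singleton_pathGraph, indepDomNum_pathGraph]
      omega
  · obtain ⟨v, hv⟩ : ∃ v : Fin n, (v.val + 2) / 3 + (n - v.val + 1) / 3 ≠ (n + 2) / 3 := by
      by_cases hmod0 : n % 3 = 0
      exacts [⟨⟨1, by omega⟩, by simp only; omega⟩, ⟨⟨n - 1, by omega⟩, by simp only; omega⟩]
    refine idStability_eq (Finset.card_singleton v) (Finset.singleton_nonempty v) ?_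
      fun A hA hcard => absurd hA.card_pos (by omega)
    rwa [indepDomNum_induce_compl_singleton_pathGraph, indepDomNum_pathGraph]
end

section
/- For the cycle C_n (n ≥ 3): st_id(C_n) = 1 if n ≡ 1 (mod 3), st_id(C_n) = 2 if n ≡ 2 (mod 3), and st_id(C_n) = 3 if n ≡ 0 (mod 3). -/
open SimpleGraph

/-!
Every vertex of a subgraph of `C_n` dominates at most three vertices, so an independent dominating
set of such a subgraph on `m` vertices has at least `⌈m/3⌉` elements, and on an arc of the cycle
every third vertex attains this bound. Hence `γᵢ(C_n) = ⌈n/3⌉`, deleting one vertex (by rotation,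
vertex `0`) gives `⌈(n-1)/3⌉`, and for `3 ∣ n` deleting two vertices leaves two arcs with `n - 2`
vertices in total and `γᵢ = n/3`. Deleting `k` consecutive vertices gives `⌈(n-k)/3⌉`, which is
below `⌈n/3⌉` for `k = 1, 2, 3` when `n ≡ 1, 2, 0 (mod 3)` respectively.
-/

namespace SimpleGraph

variable {V W : Type*} {G : SimpleGraph V} {H : SimpleGraph W}

/-- `T` is an independent dominating set of `G.induce s`, viewed as a set of vertices of `G`. -/
def IsIndepDomSetWithin (G : SimpleGraph V) (s T : Set V) : Prop :=
  T ⊆ s ∧ T.Pairwise (fun u v => ¬ G.Adj u v) ∧ ∀ v ∈ s, v ∉ T → ∃ u ∈ T, G.Adj v u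

theorem IsIndepDomSetWithin.union {s t T T' : Set V} (hT : G.IsIndepDomSetWithin s T)
    (hT' : G.IsIndepDomSetWithin t T') (hsep : ∀ u ∈ T, ∀ v ∈ T', ¬ G.Adj u v) :
    G.IsIndepDomSetWithin (s ∪ t) (T ∪ T') := by
  obtain ⟨hTs, hTind, hTdom⟩ := hT
  obtain ⟨hT't, hT'ind, hT'dom⟩ := hT'
  refine ⟨Set.union_subset_union hTs hT't, Set.pairwise_union.2 ⟨hTind, hT'ind,
    fun u hu v hv _ => ⟨hsep u hu v hv, fun h => hsep u hu v hv h.symm⟩⟩, ?_⟩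
  rintro v (hv | hv) hvT
  · obtain ⟨u, hu, huv⟩ := hTdom v hv fun h => hvT (Or.inl h)
    exact ⟨u, Or.inl hu, huv⟩
  · obtain ⟨u, hu, huv⟩ := hT'dom v hv fun h => hvT (Or.inr h)
    exact ⟨u, Or.inr hu, huv⟩

theorem IsIndepDomSetWithin.isIndepDomSet_induce {s T : Set V}
    (h : G.IsIndepDomSetWithin s T) : (G.induce s).IsIndepDomSet (Subtype.val ⁻¹' T) :=
  ⟨fun _ hu _ hv huv => h.2.1 hu hv (Subtype.val_injective.ne huv),
    fun v hv => by
      obtain ⟨u, hu, huv⟩ := h.2.2 v v.2 hv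
      exact ⟨⟨u, h.1 hu⟩, hu, huv⟩⟩

theorem IsIndepDomSet.image (e : G ≃g H) {S : Set V} (h : G.IsIndepDomSet S) :
    H.IsIndepDomSet (e '' S) := by
  refine ⟨(e.injective.injOn.pairwise_image).2 fun u hu v hv huv => ?_, fun v hv => ?_⟩
  · exact fun hadj => h.1 hu hv huv (e.map_adj_iff.1 hadj)
  · obtain ⟨u, hu, hvu⟩ := h.2 (e.symm v) fun h' => hv ⟨_, h', e.apply_symm_apply v⟩
    exact ⟨e u, Set.mem_image_of_mem e hu, by simpa using e.map_adj_iff.2 hvu⟩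

end SimpleGraph

section IndepDomNum

variable {V W : Type*} {G : SimpleGraph V} {H : SimpleGraph W}

theorem exists_isIndepDomSet [Fintype V] (G : SimpleGraph V) :
    ∃ S : Finset V, G.IsIndepDomSet S := by
  classical
  obtain ⟨S, -, hS⟩ := _root_.Finite.exists_le_maximal
    (p := fun S : Finset V => (S : Set V).Pairwise fun u v => ¬ G.Adj u v) (a := ∅) (by simp)
  refine ⟨S, hS.1, fun v hv => ?_⟩
  by_contra! hfree
  have hins : ((insert v S : Finset V) : Set V).Pairwise fun u w => ¬ G.Adj u w := by
    rw [Finset.coe_insert, Set.pairwise_insert]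
    exact ⟨hS.1, fun u hu _ => ⟨fun h => hfree u hu h, fun h => hfree u hu h.symm⟩⟩
  exact hv (hS.2 hins (Finset.subset_insert v S) (Finset.mem_insert_self v S))

theorem exists_isIndepDomSet_card_eq_indepDomNum [Fintype V] (G : SimpleGraph V) :
    ∃ S : Finset V, G.IsIndepDomSet S ∧ S.card = indepDomNum V G := by
  obtain ⟨S, hS⟩ := exists_isIndepDomSet G
  exact Nat.sInf_mem (s := {m | ∃ S : Finset V, G.IsIndepDomSet ↑S ∧ S.card = m}) ⟨_, S, hS, rfl⟩

theorem indepDomNum_le_card [Fintype V] {S : Finset V} (h : G.IsIndepDomSet S) :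
    indepDomNum V G ≤ S.card :=
  Nat.sInf_le ⟨S, h, rfl⟩

theorem indepDomNum_le_of_iso [Fintype V] [Fintype W] (e : G ≃g H) :
    indepDomNum W H ≤ indepDomNum V G := by
  classical
  obtain ⟨S, hS, hcard⟩ := exists_isIndepDomSet_card_eq_indepDomNum G
  calc indepDomNum W H ≤ (S.map e.toEquiv.toEmbedding).card :=
        indepDomNum_le_card (by rw [Finset.coe_map]; exact hS.image e)
    _ = indepDomNum V G := by rw [Finset.card_map, hcard]

theorem indepDomNum_congr [Fintype V] [Fintype W] (e : G ≃g H) :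
    indepDomNum V G = indepDomNum W H :=
  le_antisymm (indepDomNum_le_of_iso e.symm) (indepDomNum_le_of_iso e)

theorem indepDomNum_induce_le_card {s : Set V} [Fintype s] {T : Finset V}
    (h : G.IsIndepDomSetWithin s T) : indepDomNum s (G.induce s) ≤ T.card := by
  classical
  calc indepDomNum s (G.induce s) ≤ (T.subtype (· ∈ s)).card :=
        indepDomNum_le_card (by convert h.isIndepDomSet_induce; ext; simp)
    _ ≤ T.card := by rw [Finset.card_subtype]; exact Finset.card_filter_le _ _

theorem card_le_mul_card_of_dominating [Fintype V] [DecidableRel G.Adj] {d : ℕ}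
    (hd : ∀ v, G.degree v ≤ d) {S : Finset V} (hS : ∀ v ∉ S, ∃ u ∈ S, G.Adj v u) :
    Fintype.card V ≤ (d + 1) * S.card := by
  classical
  have hcover : Finset.univ ⊆ S.biUnion fun u => insert u (G.neighborFinset u) := by
    intro v _
    rw [Finset.mem_biUnion]
    by_cases hv : v ∈ S
    · exact ⟨v, hv, Finset.mem_insert_self _ _⟩
    · obtain ⟨u, hu, hvu⟩ := hS v hv
      exact ⟨u, hu, Finset.mem_insert_of_mem ((G.mem_neighborFinset u v).2 hvu.symm)⟩
  calc Fintype.card V ≤ (S.biUnion fun u => insert u (G.neighborFinset u)).card :=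
        Finset.card_le_card hcover
    _ ≤ ∑ u ∈ S, (insert u (G.neighborFinset u)).card := Finset.card_biUnion_le
    _ ≤ ∑ _u ∈ S, (d + 1) := Finset.sum_le_sum fun u _ =>
        (Finset.card_insert_le _ _).trans (Nat.succ_le_succ (hd u))
    _ = (d + 1) * S.card := by rw [Finset.sum_const, smul_eq_mul, mul_comm]

theorem card_le_mul_indepDomNum [Fintype V] [DecidableRel G.Adj] {d : ℕ}
    (hd : ∀ v, G.degree v ≤ d) :
    Fintype.card V ≤ (d + 1) * indepDomNum V G := by
  obtain ⟨S, hS, hcard⟩ := exists_isIndepDomSet_card_eq_indepDomNum G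
  exact hcard ▸ card_le_mul_card_of_dominating hd hS.2

theorem idStability_eq_of_forall_lt [Fintype V] [DecidableEq V] {k : ℕ}
    (hk : ∃ A : Finset V, A.card = k ∧ A.Nonempty ∧
      indepDomNum _ (G.induce (↑(Aᶜ) : Set V)) ≠ indepDomNum V G)
    (hlt : ∀ A : Finset V, A.Nonempty → A.card < k →
      indepDomNum _ (G.induce (↑(Aᶜ) : Set V)) = indepDomNum V G) :
    idStability V G = k :=
  le_antisymm (Nat.sInf_le hk) <| le_csInf ⟨k, hk⟩ fun _ ⟨A, hcard, hA, hne⟩ =>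
    not_lt.1 fun h => hne (hlt A hA (hcard ▸ h))

theorem indepDomNum_induce_compl_congr [Fintype V] [Fintype W] [DecidableEq V] [DecidableEq W]
    (e : G ≃g H) {A : Finset V} {B : Finset W} (hAB : A.image e = B) :
    indepDomNum _ (G.induce (↑(Aᶜ) : Set V)) = indepDomNum _ (H.induce (↑(Bᶜ) : Set W)) :=
  indepDomNum_congr <| e.induce <| e.toEquiv.image_eq_iff_bijOn.1 <| by
    rw [← hAB, Finset.coe_compl, Finset.coe_compl, Finset.coe_image]
    exact Set.image_compl_eq e.bijective

end IndepDomNum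

section Cycle

variable {n : ℕ}

theorem cycleGraph_adj_iff_val (hn : 2 ≤ n) {u v : Fin n} :
    (cycleGraph n).Adj u v ↔ u.val + 1 = v.val ∨ v.val + 1 = u.val ∨
      (u.val = 0 ∧ v.val + 1 = n) ∨ (v.val = 0 ∧ u.val + 1 = n) := by
  have hsub : ∀ a b : Fin n, (a - b).val = if b ≤ a then a.val - b.val else n + a.val - b.val :=
    fun a b => by
      split_ifs with h
      · exact Fin.coe_sub_iff_le.2 h
      · exact Fin.coe_sub_iff_lt.2 (not_le.1 h)
  rw [cycleGraph_adj', hsub, hsub]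
  have := u.isLt
  have := v.isLt
  split_ifs <;> simp only [Fin.le_def] at * <;> omega

def cycleGraphSubRightIso [NeZero n] (c : Fin n) : cycleGraph n ≃g cycleGraph n where
  toEquiv := Equiv.subRight c
  map_rel_iff' := by simp [cycleGraph_adj', sub_sub_sub_cancel_right]

@[simp]
theorem cycleGraphSubRightIso_apply [NeZero n] (c x : Fin n) :
    cycleGraphSubRightIso c x = x - c :=
  rfl

theorem card_coe_compl_fin (A : Finset (Fin n)) :
    Fintype.card (↑(Aᶜ) : Set (Fin n)) = n - A.card :=
  (Fintype.card_coe Aᶜ).trans (by rw [Finset.card_compl, Fintype.card_fin])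

theorem card_le_three_mul_indepDomNum_induce_cycleGraph (hn : 2 ≤ n) (s : Set (Fin n))
    [Fintype s] : Fintype.card s ≤ 3 * indepDomNum s ((cycleGraph n).induce s) := by
  classical
  obtain ⟨m, rfl⟩ : ∃ m, n = m + 2 := ⟨n - 2, by omega⟩
  refine card_le_mul_indepDomNum fun v => ?_
  calc ((cycleGraph (m + 2)).induce s).degree v ≤ (cycleGraph (m + 2)).degree v :=
        (Copy.induce _ s).degree_le v
    _ ≤ 2 := by rw [cycleGraph_degree_two_le]; exact Finset.card_le_two

/-- The vertices `a + 1, a + 4, a + 7, …` of the arc `[a, b)`, the last one moved to `b - 1`. -/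
theorem exists_isIndepDomSetWithin_arc (hn : 2 ≤ n) {a b : ℕ} (hbn : b ≤ n) :
    ∃ T : Finset (Fin n), T.card ≤ (b - a + 2) / 3 ∧
      (cycleGraph n).IsIndepDomSetWithin {x | a ≤ x.val ∧ x.val < b} T := by
  classical
  let g : ℕ → Fin n := fun k => ⟨min (a + 1 + 3 * k) (b - 1), by omega⟩
  have hg : ∀ k, (g k).val = min (a + 1 + 3 * k) (b - 1) := fun _ => rfl
  refine ⟨(Finset.range ((b - a + 2) / 3)).image g,
    Finset.card_image_le.trans (Finset.card_range _).le, ?_, ?_, ?_⟩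
  · intro x hx
    simp only [Finset.coe_image, Finset.coe_range, Set.mem_image, Set.mem_Iio] at hx
    obtain ⟨k, hk, rfl⟩ := hx
    show a ≤ (g k).val ∧ (g k).val < b
    rw [hg]
    omega
  · intro x hx y hy hxy
    simp only [Finset.coe_image, Finset.coe_range, Set.mem_image, Set.mem_Iio] at hx hy
    obtain ⟨k, hk, rfl⟩ := hx
    obtain ⟨l, hl, rfl⟩ := hy
    rw [Ne, Fin.ext_iff, hg, hg] at hxy
    rw [cycleGraph_adj_iff_val hn, hg, hg]
    omega
  · rintro x ⟨hax, hxb⟩ hx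
    have hk : (x.val - a) / 3 < (b - a + 2) / 3 := by omega
    have hne : g ((x.val - a) / 3) ≠ x := fun h =>
      hx (by rw [← h]; exact Finset.mem_coe.2 (Finset.mem_image_of_mem g (Finset.mem_range.2 hk)))
    refine ⟨g ((x.val - a) / 3), Finset.mem_coe.2 (Finset.mem_image_of_mem g
      (Finset.mem_range.2 hk)), ?_⟩
    rw [Ne, Fin.ext_iff, hg] at hne
    rw [cycleGraph_adj_iff_val hn, hg]
    omega

theorem indepDomNum_induce_cycleGraph_arc_le (hn : 2 ≤ n) {s : Set (Fin n)} [Fintype s]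
    {a b : ℕ} (hbn : b ≤ n) (hs : s = {x | a ≤ x.val ∧ x.val < b}) :
    indepDomNum s ((cycleGraph n).induce s) ≤ (b - a + 2) / 3 := by
  obtain ⟨T, hcard, hT⟩ := exists_isIndepDomSetWithin_arc hn (a := a) hbn
  exact (indepDomNum_induce_le_card (hs ▸ hT)).trans hcard

theorem indepDomNum_cycleGraph (hn : 2 ≤ n) :
    indepDomNum (Fin n) (cycleGraph n) = (n + 2) / 3 := by
  rw [← indepDomNum_congr (induceUnivIso (cycleGraph n))]
  refine le_antisymm (indepDomNum_induce_cycleGraph_arc_le hn (a := 0) le_rfl ?_) ?_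
  · ext x
    simp
  · have := card_le_three_mul_indepDomNum_induce_cycleGraph hn Set.univ
    rw [Fintype.card_setUniv, Fintype.card_fin] at this
    omega

theorem indepDomNum_cycleGraph_delete_of_card_eq_one (hn : 2 ≤ n) {A : Finset (Fin n)}
    (hA : A.card = 1) :
    indepDomNum _ ((cycleGraph n).induce (↑(Aᶜ) : Set (Fin n))) = (n + 1) / 3 := by
  have : NeZero n := ⟨by omega⟩
  obtain ⟨v, rfl⟩ := Finset.card_eq_one.1 hA
  rw [indepDomNum_induce_compl_congr (cycleGraphSubRightIso v) (B := {0}) (by simp)]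
  refine le_antisymm ((indepDomNum_induce_cycleGraph_arc_le hn (a := 1) le_rfl ?_).trans
    (by omega)) ?_
  · ext x
    simp only [Finset.coe_compl, Finset.coe_singleton, Set.mem_compl_iff, Set.mem_singleton_iff,
      Fin.ext_iff, Fin.val_zero, Set.mem_ofPred_eq]
    omega
  · have := card_le_three_mul_indepDomNum_induce_cycleGraph hn
      (↑(({0} : Finset (Fin n))ᶜ) : Set (Fin n))
    rw [card_coe_compl_fin, Finset.card_singleton] at this
    omega

theorem indepDomNum_cycleGraph_delete_of_card_eq_two (hn : 2 ≤ n) (h3 : 3 ∣ n)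
    {A : Finset (Fin n)} (hA : A.card = 2) :
    indepDomNum _ ((cycleGraph n).induce (↑(Aᶜ) : Set (Fin n))) = n / 3 := by
  have : NeZero n := ⟨by omega⟩
  obtain ⟨u, v, huv, rfl⟩ := Finset.card_eq_two.1 hA
  rw [indepDomNum_induce_compl_congr (cycleGraphSubRightIso u) (B := {0, v - u})
    (by simp [Finset.image_insert])]
  have hd : v - u ≠ 0 := sub_ne_zero.2 huv.symm
  have hd' : (v - u).val ≠ 0 := fun h => hd (Fin.val_eq_zero_iff.1 h)
  refine le_antisymm ?_ ?_
  · obtain ⟨T, hT, hTw⟩ := exists_isIndepDomSetWithin_arc hn (a := 1) (v - u).isLt.le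
    obtain ⟨T', hT', hT'w⟩ := exists_isIndepDomSetWithin_arc hn (a := (v - u).val + 1) le_rfl
    have hsep : ∀ x ∈ (T : Set (Fin n)), ∀ y ∈ (T' : Set (Fin n)), ¬ (cycleGraph n).Adj x y :=
      fun x hx y hy => by
        have hx := hTw.1 hx
        have hy := hT'w.1 hy
        simp only [Set.mem_ofPred_eq] at hx hy
        rw [cycleGraph_adj_iff_val hn]
        omega
    have hs : (↑(({0, v - u} : Finset (Fin n))ᶜ) : Set (Fin n)) =
        {x | 1 ≤ x.val ∧ x.val < (v - u).val} ∪ {x | (v - u).val + 1 ≤ x.val ∧ x.val < n} := by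
      ext x
      simp only [Finset.coe_compl, Finset.coe_insert, Finset.coe_singleton, Set.mem_compl_iff,
        Set.mem_insert_iff, Set.mem_singleton_iff, Fin.ext_iff, Fin.val_zero, Set.mem_union,
        Set.mem_ofPred_eq]
      omega
    have hunion := hTw.union hT'w hsep
    rw [← Finset.coe_union, ← hs] at hunion
    calc _ ≤ (T ∪ T').card := indepDomNum_induce_le_card hunion
      _ ≤ T.card + T'.card := Finset.card_union_le T T'
      _ ≤ n / 3 := by omega
  · have := card_le_three_mul_indepDomNum_induce_cycleGraph hn
      (↑(({0, v - u} : Finset (Fin n))ᶜ) : Set (Fin n))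
    rw [card_coe_compl_fin, Finset.card_pair hd.symm] at this
    omega

/-- The witness deletes the first `k` vertices, leaving a path on `n - k` vertices. -/
theorem exists_indepDomNum_cycleGraph_delete_ne (hn : 2 ≤ n) {k : ℕ} (hkn : k ≤ n)
    (hlt : (n - k + 2) / 3 < (n + 2) / 3) :
    ∃ A : Finset (Fin n), A.card = k ∧ A.Nonempty ∧
      indepDomNum _ ((cycleGraph n).induce (↑(Aᶜ) : Set (Fin n))) ≠
        indepDomNum (Fin n) (cycleGraph n) := by
  have hcard : (Finset.univ.filter fun x : Fin n => x.val < k).card = k := by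
    rw [Fin.card_filter_val_lt, min_eq_right hkn]
  refine ⟨_, hcard, Finset.card_pos.1 (by rw [hcard]; omega), ne_of_lt ?_⟩
  rw [indepDomNum_cycleGraph hn]
  refine lt_of_le_of_lt (indepDomNum_induce_cycleGraph_arc_le hn (a := k) le_rfl ?_) hlt
  ext x
  simp only [Finset.coe_compl, Finset.coe_filter, Finset.mem_univ, true_and, Set.mem_compl_iff,
    Set.mem_ofPred_eq, not_lt, x.isLt, and_true]

end Cycle

/-- For the cycle `C_n` (`n ≥ 3`): `st_id(C_n)` is 1, 2, or 3 according to
whether `n` is ≡ 1, 2 or 0 modulo 3. -/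
theorem stmt12 (n : ℕ) (hn : 3 ≤ n) :
    idStability _ (cycleGraph n) =
      if n % 3 = 1 then 1 else if n % 3 = 2 then 2 else 3 := by
  have hC := indepDomNum_cycleGraph (n := n) (by omega)
  have hdel1 := @indepDomNum_cycleGraph_delete_of_card_eq_one n (by omega)
  split_ifs with h1 h2
  · exact idStability_eq_of_forall_lt (exists_indepDomNum_cycleGraph_delete_ne (by omega)
      (k := 1) (by omega) (by omega)) fun A hA hlt => absurd hA.card_pos (by omega)
  · refine idStability_eq_of_forall_lt (exists_indepDomNum_cycleGraph_delete_ne (by omega)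
      (k := 2) (by omega) (by omega)) fun A hA hlt => ?_
    rw [hdel1 (by have := hA.card_pos; omega), hC]
    omega
  · refine idStability_eq_of_forall_lt (exists_indepDomNum_cycleGraph_delete_ne (by omega)
      (k := 3) (by omega) (by omega)) fun A hA hlt => ?_
    rw [hC]
    obtain hA1 | hA2 : A.card = 1 ∨ A.card = 2 := by have := hA.card_pos; omega
    · rw [hdel1 hA1]
      omega
    · rw [indepDomNum_cycleGraph_delete_of_card_eq_two (by omega) (by omega) hA2]
      omega
end

section
/- For any graph G on n ≥ 2 vertices with G ≠ K_n, st_id(G) ≤ n − 1. -/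
open SimpleGraph

lemma indepDomNum_of_card_one {W : Type*} [Fintype W] (H : SimpleGraph W)
    (h : Fintype.card W = 1) : indepDomNum W H = 1 := by
  obtain ⟨v, hv⟩ := Fintype.card_eq_one_iff.mp h
  have hmem : (1 : ℕ) ∈ {n | ∃ S : Finset W, H.IsIndepDomSet ↑S ∧ S.card = n} := by
    refine ⟨{v}, ⟨?_, ?_⟩, Finset.card_singleton v⟩
    · simp [Set.pairwise_singleton]
    · intro x hx; exact absurd (hv x) (by simpa using hx)
  rw [indepDomNum]
  refine le_antisymm (Nat.sInf_le hmem) (Nat.one_le_iff_ne_zero.mpr ?_)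
  intro h0
  have hm := Nat.sInf_mem (⟨1, hmem⟩ : Set.Nonempty _)
  rw [h0] at hm
  obtain ⟨S, ⟨_, hdom⟩, hcard⟩ := hm
  rw [Finset.card_eq_zero] at hcard
  subst hcard
  obtain ⟨u, hu, _⟩ := hdom v (by simp)
  simp at hu

lemma indepDomNum_no_edges {W : Type*} [Fintype W] (H : SimpleGraph W)
    (hno : ∀ a b, ¬H.Adj a b) : indepDomNum W H = Fintype.card W := by
  rw [indepDomNum]
  have hmem : Fintype.card W ∈ {n | ∃ S : Finset W, H.IsIndepDomSet ↑S ∧ S.card = n} := by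
    refine ⟨Finset.univ, ⟨fun a _ b _ _ => hno a b, fun v hv => absurd (Finset.mem_univ v) (by simpa using hv)⟩, Finset.card_univ⟩
  obtain ⟨S, ⟨_, hdom⟩, hcard⟩ := Nat.sInf_mem (⟨_, hmem⟩ : Set.Nonempty _)
  have hS : S = Finset.univ := by
    ext v
    simp only [Finset.mem_univ, iff_true]
    by_contra hv
    obtain ⟨u, _, hadj⟩ := hdom v (by simpa using hv)
    exact hno v u hadj
  rw [← hcard, hS, Finset.card_univ]

/-- For any graph `G` on `n ≥ 2` vertices with `G ≠ K_n`, `st_id(G) ≤ n - 1`. -/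
theorem stmt14 {V : Type*} [Fintype V] [DecidableEq V] (G : SimpleGraph V)
    (hn : 2 ≤ Fintype.card V) (hG : G ≠ ⊤) :
    idStability V G ≤ Fintype.card V - 1 := by
  by_cases h1 : indepDomNum V G = 1
  · -- γᵢ = 1 : there is a universal vertex; pick a non-edge u-w and remove all else
    have hne : {n | ∃ S : Finset V, G.IsIndepDomSet ↑S ∧ S.card = n}.Nonempty := by
      by_contra hc
      rw [Set.not_nonempty_iff_eq_empty] at hc
      rw [indepDomNum, hc, Nat.sInf_empty] at h1
      exact absurd h1 (by norm_num)
    obtain ⟨S, ⟨hindep, hdom⟩, hcard⟩ := Nat.sInf_mem hne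
    have hcard1 : S.card = 1 := by
      rw [hcard]; exact h1
    obtain ⟨v, hv⟩ := Finset.card_eq_one.mp hcard1
    subst hv
    have huniv : ∀ x, x ≠ v → G.Adj x v := by
      intro x hx
      obtain ⟨u, hu, hadj⟩ := hdom x (by simpa using hx)
      simp only [Finset.coe_singleton, Set.mem_singleton_iff] at hu
      subst hu; exact hadj
    obtain ⟨u, w, huw, hnadj⟩ : ∃ u w, u ≠ w ∧ ¬ G.Adj u w := by
      by_contra hc
      push_neg at hc
      apply hG
      ext a b
      simp only [top_adj]
      exact ⟨fun h => h.ne, fun h => hc a b h⟩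
    have huv : u ≠ v := by
      rintro rfl
      exact hnadj ((huniv w (Ne.symm huw)).symm)
    have hwv : w ≠ v := by
      rintro rfl
      exact hnadj (huniv u huw)
    have h3 : 3 ≤ Fintype.card V := by
      have hc3 : ({u, w, v} : Finset V).card = 3 := by
        rw [Finset.card_insert_of_notMem (by simp [huw, huv]),
          Finset.card_insert_of_notMem (by simp [hwv]), Finset.card_singleton]
      calc 3 = ({u, w, v} : Finset V).card := hc3.symm
        _ ≤ Finset.univ.card := Finset.card_le_univ _
        _ = Fintype.card V := Finset.card_univ
    have hcardA : (({u, w} : Finset V)ᶜ).card = Fintype.card V - 2 := by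
      rw [Finset.card_compl]
      congr 1
      rw [Finset.card_insert_of_notMem (by simp [huw]), Finset.card_singleton]
    refine le_trans (Nat.sInf_le ⟨({u, w} : Finset V)ᶜ, rfl, ?_, ?_⟩) ?_
    · rw [← Finset.card_pos, hcardA]; omega
    · have hno : ∀ a b, ¬ (G.induce (↑((({u, w} : Finset V)ᶜ)ᶜ) : Set V)).Adj a b := by
        rintro ⟨a, ha⟩ ⟨b, hb⟩ hab
        simp only [compl_compl, Finset.coe_insert, Finset.coe_singleton,
          Set.mem_insert_iff, Set.mem_singleton_iff] at ha hb
        have hab' : G.Adj a b := hab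
        rcases ha with rfl | rfl <;> rcases hb with rfl | rfl
        · exact G.irrefl hab'
        · exact hnadj hab'
        · exact hnadj hab'.symm
        · exact G.irrefl hab'
      rw [indepDomNum_no_edges _ hno, h1]
      simp only [compl_compl, Finset.coe_sort_coe, Fintype.card_coe]
      simp [huw]
    · rw [hcardA]; omega
  · -- γᵢ ≠ 1 : remove all but one vertex
    have : Nonempty V := Fintype.card_pos_iff.mp (by omega)
    obtain ⟨v⟩ := this
    refine le_trans (Nat.sInf_le ⟨({v} : Finset V)ᶜ, rfl, ?_, ?_⟩) ?_
    · rw [← Finset.card_pos, Finset.card_compl, Finset.card_singleton]; omega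
    · rw [indepDomNum_of_card_one _ (by simp [compl_compl])]
      exact fun h => h1 h.symm
    · rw [Finset.card_compl, Finset.card_singleton]
end

section
/- For any graph G of order n with γᵢ(G) ≥ 2, st_id(G) ≤ n / γᵢ(G). -/
open SimpleGraph

/-- For any graph `G` of order `n` with `γᵢ(G) ≥ 2`, `st_id(G) ≤ n / γᵢ(G)`. -/
theorem stmt17 {V : Type*} [Fintype V] [DecidableEq V] (G : SimpleGraph V)
    (h : 2 ≤ indepDomNum V G) :
    (idStability V G : ℝ) ≤ Fintype.card V / indepDomNum V G := by
  classical
  set γ := indepDomNum V G with hγdef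
  have hpos : 0 < γ := by omega
  -- the defining set of indepDomNum is nonempty
  have hne : {n | ∃ S : Finset V, G.IsIndepDomSet ↑S ∧ S.card = n}.Nonempty := by
    by_contra hc
    rw [Set.not_nonempty_iff_eq_empty] at hc
    have : γ = 0 := by
      rw [hγdef]; unfold indepDomNum; rw [hc, Nat.sInf_empty]
    omega
  obtain ⟨I, hIset, hIcard⟩ := Nat.sInf_mem hne
  have hIcard' : I.card = γ := hIcard
  -- private-neighbor based sets
  set A : V → Finset V := fun v =>
    insert v (Finset.univ.filter fun u => G.Adj u v ∧ ∀ w ∈ I, G.Adj u w → w = v)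
    with hAdef
  have hmemA : ∀ v u, u ∈ A v ↔ u = v ∨ (G.Adj u v ∧ ∀ w ∈ I, G.Adj u w → w = v) := by
    intro v u
    simp [hAdef]
  -- pairwise disjointness on I
  have hdisj : (↑I : Set V).PairwiseDisjoint A := by
    intro v hv w hw hvw
    simp only [Function.onFun]
    rw [Finset.disjoint_left]
    intro u huv huw
    rw [hmemA] at huv huw
    rcases huv with rfl | ⟨hadj1, hall1⟩
    · rcases huw with rfl | ⟨hadj2, hall2⟩
      · exact hvw rfl
      · exact hIset.1 hw hv (Ne.symm hvw) hadj2.symm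
    · rcases huw with rfl | ⟨hadj2, hall2⟩
      · exact hIset.1 hv hw hvw hadj1.symm
      · exact hvw (hall2 v hv hadj1)
  -- sum of cards is at most n
  have hsum : ∑ v ∈ I, (A v).card ≤ Fintype.card V := by
    rw [← Finset.card_biUnion (fun v hv w hw hvw => hdisj hv hw hvw)]
    exact Finset.card_le_univ _
  have hInonempty : I.Nonempty := by
    rw [← Finset.card_pos, hIcard']; omega
  obtain ⟨v, hvI, hvmin⟩ := Finset.exists_min_image I (fun v => (A v).card) hInonempty
  have hγmul : γ * (A v).card ≤ Fintype.card V := by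
    calc γ * (A v).card = ∑ _w ∈ I, (A v).card := by
          rw [Finset.sum_const, smul_eq_mul, hIcard']
      _ ≤ ∑ w ∈ I, (A w).card := Finset.sum_le_sum fun w hw => hvmin w hw
      _ ≤ Fintype.card V := hsum
  -- removing A v decreases the independent domination number
  have hvA : v ∈ A v := by rw [hmemA]; left; rfl
  set S' : Finset (↑(↑((A v)ᶜ) : Set V)) :=
    (I.erase v).subtype (fun u => u ∈ (↑((A v)ᶜ) : Set V)) with hS'def
  have hmemS' : ∀ x, x ∈ S' ↔ (x : V) ∈ I.erase v := by
    intro x; simp [hS'def]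
  have hcompl : ∀ x : ↑(↑((A v)ᶜ) : Set V), (x : V) ∉ A v := by
    intro x
    have := x.2
    simpa using this
  have hS'card : S'.card = γ - 1 := by
    rw [hS'def, Finset.card_subtype, Finset.filter_true_of_mem, Finset.card_erase_of_mem hvI,
      hIcard']
    intro u hu
    have huI : u ∈ I := Finset.mem_of_mem_erase hu
    have huv : u ≠ v := Finset.ne_of_mem_erase hu
    simp only [Finset.coe_compl, Set.mem_compl_iff, Finset.mem_coe]
    rw [hmemA]
    rintro (rfl | ⟨hadj, _⟩)
    · exact huv rfl
    · exact hIset.1 huI hvI huv hadj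
  have hIDS' : (G.induce (↑((A v)ᶜ) : Set V)).IsIndepDomSet ↑S' := by
    constructor
    · intro a ha b hb hab hadj
      rw [Finset.mem_coe, hmemS'] at ha hb
      have : G.Adj (a : V) (b : V) := hadj
      exact hIset.1 (Finset.mem_of_mem_erase ha) (Finset.mem_of_mem_erase hb)
        (fun hh => hab (Subtype.ext hh)) this
    · intro x hx
      rw [Finset.mem_coe, hmemS'] at hx
      have hxv : (x : V) ≠ v := fun hh => hcompl x (by rw [hh]; exact hvA)
      have hxI : (x : V) ∉ I := fun hh => hx (Finset.mem_erase.2 ⟨hxv, hh⟩)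
      obtain ⟨w, hwI, hadj⟩ := hIset.2 (x : V) hxI
      rw [Finset.mem_coe] at hwI
      -- get a neighbor of x in I other than v
      have : ∃ w' ∈ I, G.Adj (x : V) w' ∧ w' ≠ v := by
        by_cases hwv : w = v
        · subst hwv
          have := hcompl x
          rw [hmemA] at this
          push_neg at this
          obtain ⟨w', hw'I, hadj', hw'v⟩ := this.2 hadj
          exact ⟨w', hw'I, hadj', hw'v⟩
        · exact ⟨w, hwI, hadj, hwv⟩
      obtain ⟨w', hw'I, hadj', hw'v⟩ := this
      have hw'A : w' ∉ A v := by
        rw [hmemA]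
        rintro (rfl | ⟨hadj'', _⟩)
        · exact hw'v rfl
        · exact hIset.1 hw'I hvI hw'v hadj''
      refine ⟨⟨w', by simpa using hw'A⟩, ?_, ?_⟩
      · rw [Finset.mem_coe, hmemS']
        exact Finset.mem_erase.2 ⟨hw'v, hw'I⟩
      · exact hadj'
  have hle : indepDomNum _ (G.induce (↑((A v)ᶜ) : Set V)) ≤ γ - 1 :=
    Nat.sInf_le ⟨S', hIDS', hS'card⟩
  have hneq : indepDomNum _ (G.induce (↑((A v)ᶜ) : Set V)) ≠ γ := by omega
  have hstab : idStability V G ≤ (A v).card :=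
    Nat.sInf_le ⟨A v, rfl, ⟨v, hvA⟩, hneq⟩
  -- conclude in ℝ
  have hγR : (0 : ℝ) < (γ : ℝ) := by exact_mod_cast hpos
  calc (idStability V G : ℝ) ≤ ((A v).card : ℝ) := by exact_mod_cast hstab
    _ ≤ Fintype.card V / γ := by
        rw [le_div_iff₀ hγR]
        calc ((A v).card : ℝ) * γ = (γ * (A v).card : ℕ) := by push_cast; ring
          _ ≤ (Fintype.card V : ℝ) := by exact_mod_cast hγmul
end
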